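/- arXiv:1501.03838 — 5 statements merged into one kernel-verified Lean document; each statement's English description precedes it below -/
import Mathlib

section
/- The value of the confidence-rated prediction game equals V: sup_{g ∈ [-1,1]^n} inf_{z ∈ Z} (1/n)·∑_{i=1}^n z_i g_i = V = (v-1)/n + (λ - (1/n)·∑_{i=1}^{v-1} |a_i|)/|a_v|. -/
open Finset

private lemma split_sum (n w : ℕ) (hvn : w + 1 ≤ n) (f : ℕ → ℝ) :
    ∑ i ∈ Icc 1 n, f i = ∑ i ∈ Icc 1 w, f i + f (w+1) + ∑ i ∈ Icc (w+2) n, f i := by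
  have e1 : Icc 1 n = Ioc 0 n := Finset.Icc_add_one_left_eq_Ioc 0 n
  have e2 : Icc 1 (w+1) = Ioc 0 (w+1) := Finset.Icc_add_one_left_eq_Ioc 0 (w+1)
  have e3 : Icc (w+2) n = Ioc (w+1) n := Finset.Icc_add_one_left_eq_Ioc (w+1) n
  have h1 : ∑ i ∈ Icc 1 n, f i = ∑ i ∈ Icc 1 (w+1), f i + ∑ i ∈ Icc (w+2) n, f i := by
    rw [e1, e2, e3]
    exact (Finset.sum_Ioc_consecutive f (Nat.zero_le (w+1)) hvn).symm
  rw [h1, Finset.sum_Icc_succ_top (by omega : 1 ≤ w + 1)]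

private lemma per_term (A B zi : ℝ) (hB : 0 < B) (hAB : B ≤ |A|) (hz : |zi| ≤ 1) :
    1 - |A| / B ≤ zi * (A / |A| - A / B) := by
  have hA : 0 < |A| := hB.trans_le hAB
  have habs : |zi * (A * (B - |A|))| ≤ |A| * (|A| - B) := by
    rw [abs_mul, abs_mul, abs_of_nonpos (by linarith : B - |A| ≤ 0)]
    calc |zi| * (|A| * -(B - |A|)) ≤ 1 * (|A| * -(B - |A|)) :=
          mul_le_mul_of_nonneg_right hz (mul_nonneg (abs_nonneg A) (by linarith))
      _ = |A| * (|A| - B) := by ring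
  have key : -(|A| * (|A| - B)) ≤ zi * (A * (B - |A|)) := by
    have h := neg_abs_le (zi * (A * (B - |A|)))
    linarith
  have h1 : 1 - |A| / B = -(|A| * (|A| - B)) / (|A| * B) := by
    field_simp; ring
  have h2 : zi * (A / |A| - A / B) = zi * (A * (B - |A|)) / (|A| * B) := by
    have e : A / |A| - A / B = A * (B - |A|) / (|A| * B) := by
      rw [div_sub_div _ _ hA.ne' hB.ne']
      congr 1
      ring
    rw [e]; ring
  rw [h1, h2]
  gcongr

/-- The value of the confidence-rated prediction game equals V. -/
theorem game_value_eq_V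
    (n : ℕ) (hn : 1 ≤ n) (a : ℕ → ℝ)
    (hord : ∀ i j : ℕ, 1 ≤ i → i ≤ j → j ≤ n → |a j| ≤ |a i|)
    (lam : ℝ) (hlam_pos : 0 < lam)
    (hlam_le : lam ≤ (1 / (n : ℝ)) * ∑ i ∈ Icc 1 n, |a i|)
    (v : ℕ) (hv1 : 1 ≤ v) (hvn : v ≤ n)
    (hv_ge : lam ≤ (1 / (n : ℝ)) * ∑ j ∈ Icc 1 v, |a j|)
    (hv_min : ∀ i : ℕ, 1 ≤ i → i < v → (1 / (n : ℝ)) * ∑ j ∈ Icc 1 i, |a j| < lam)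
    (V : ℝ)
    (hV : V = ((v : ℝ) - 1) / n +
        (lam - (1 / (n : ℝ)) * ∑ i ∈ Icc 1 (v - 1), |a i|) / |a v|) :
    sSup {x : ℝ | ∃ g : ℕ → ℝ, (∀ i ∈ Icc 1 n, |g i| ≤ 1) ∧
        x = sInf {y : ℝ | ∃ z : ℕ → ℝ, (∀ i ∈ Icc 1 n, |z i| ≤ 1) ∧
            lam ≤ (1 / (n : ℝ)) * ∑ i ∈ Icc 1 n, z i * a i ∧
            y = (1 / (n : ℝ)) * ∑ i ∈ Icc 1 n, z i * g i}} = V := by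
  classical
  have hn0 : (0 : ℝ) < n := by exact_mod_cast hn
  obtain ⟨w, rfl⟩ : ∃ w, v = w + 1 := ⟨v - 1, by omega⟩
  simp only [Nat.add_sub_cancel] at hV
  set S : ℝ := ∑ i ∈ Icc 1 w, |a i| with hSdef
  set B : ℝ := |a (w + 1)| with hBdef
  -- basic facts
  have hSlt : S < n * lam := by
    rcases Nat.eq_zero_or_pos w with hw0 | hw0
    · subst hw0
      simp only [hSdef, show Icc 1 0 = (∅ : Finset ℕ) from rfl, Finset.sum_empty]
      positivity
    · have h := hv_min w hw0 (by omega)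
      rw [one_div_mul_eq_div, div_lt_iff₀ hn0] at h
      rw [hSdef]; nlinarith
  have hSv : n * lam ≤ S + B := by
    rw [Finset.sum_Icc_succ_top (by omega : 1 ≤ w + 1)] at hv_ge
    rw [one_div_mul_eq_div, le_div_iff₀ hn0] at hv_ge
    rw [hSdef, hBdef]; nlinarith
  have hB0 : 0 < B := by linarith
  set c : ℝ := (n * lam - S) / B with hcdef
  have hc0 : 0 < c := div_pos (by linarith) hB0
  have hc1 : c ≤ 1 := by rw [hcdef, div_le_one hB0]; linarith
  have hVc : V = ((w : ℝ) + c) / n := by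
    rw [hV, hcdef]
    push_cast
    field_simp
    ring
  -- the good strategies
  set z0 : ℕ → ℝ := fun i => if i < w + 1 then a i / |a i| else
    if i = w + 1 then c / B * a (w + 1) else 0 with hz0def
  set g0 : ℕ → ℝ := fun i => if i < w + 1 then a i / |a i| else a i / B with hg0def
  have hane : ∀ i, 1 ≤ i → i ≤ w + 1 → a i ≠ 0 := by
    intro i h1 h2
    have h3 := hord i (w + 1) h1 h2 hvn
    have h4 : (0 : ℝ) < |a i| := lt_of_lt_of_le hB0 h3
    exact abs_pos.mp h4
  have hz0v : z0 (w + 1) = c / B * a (w + 1) := by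
    simp [hz0def]
  have hz0vabs : |z0 (w + 1)| = c := by
    rw [hz0v, abs_mul, abs_div, abs_of_pos hc0, hBdef, abs_abs, ← hBdef,
      div_mul_cancel₀ _ hB0.ne']
  have hz0tail : ∀ i : ℕ, w + 1 < i → z0 i = 0 := by
    intro i h
    simp only [hz0def, if_neg (by omega : ¬ i < w + 1), if_neg (by omega : ¬ i = w + 1)]
  have hz0bd : ∀ i ∈ Icc 1 n, |z0 i| ≤ 1 := by
    intro i hi
    rw [mem_Icc] at hi
    by_cases hlt : i < w + 1
    · simp only [hz0def, if_pos hlt]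
      rw [abs_div, abs_abs, div_self (abs_ne_zero.mpr (hane i hi.1 (by omega)))]
    · by_cases heq : i = w + 1
      · rw [heq, hz0vabs]; exact hc1
      · rw [hz0tail i (by omega)]; norm_num
  have hg0bd : ∀ i ∈ Icc 1 n, |g0 i| ≤ 1 := by
    intro i hi
    rw [mem_Icc] at hi
    by_cases hlt : i < w + 1
    · simp only [hg0def, if_pos hlt]
      rw [abs_div, abs_abs, div_self (abs_ne_zero.mpr (hane i hi.1 (by omega)))]
    · simp only [hg0def, if_neg hlt]
      rw [abs_div, hBdef, abs_abs, div_le_one (by rw [hBdef] at hB0; exact hB0)]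
      exact hord (w + 1) i (by omega) (by omega) hi.2
  have hz0constr : ∑ i ∈ Icc 1 n, z0 i * a i = n * lam := by
    rw [split_sum n w hvn]
    have hA : ∑ i ∈ Icc 1 w, z0 i * a i = S := by
      rw [hSdef]
      apply Finset.sum_congr rfl
      intro i hi
      rw [mem_Icc] at hi
      have hne : a i ≠ 0 := hane i hi.1 (by omega)
      simp only [hz0def, if_pos (by omega : i < w + 1)]
      rw [div_mul_eq_mul_div, ← abs_mul_abs_self, mul_div_assoc,
        div_self (abs_ne_zero.mpr hne), mul_one]
    have hM : z0 (w + 1) * a (w + 1) = n * lam - S := by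
      rw [hz0v, mul_assoc, ← abs_mul_abs_self, ← hBdef, ← mul_assoc,
        div_mul_cancel₀ _ hB0.ne', hcdef, div_mul_cancel₀ _ hB0.ne']
    have hT : ∑ i ∈ Icc (w + 2) n, z0 i * a i = 0 := by
      apply Finset.sum_eq_zero
      intro i hi
      rw [mem_Icc] at hi
      rw [hz0tail i (by omega), zero_mul]
    rw [hA, hM, hT]; ring
  have hz0feas : lam ≤ 1 / (n : ℝ) * ∑ i ∈ Icc 1 n, z0 i * a i := by
    rw [hz0constr, one_div_mul_eq_div, le_div_iff₀ hn0]; nlinarith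
  -- payoff of z0 against any g is at most w + c
  have hz0pay : ∀ g : ℕ → ℝ, (∀ i ∈ Icc 1 n, |g i| ≤ 1) →
      ∑ i ∈ Icc 1 n, z0 i * g i ≤ (w : ℝ) + c := by
    intro g hg
    rw [split_sum n w hvn]
    have hA : ∑ i ∈ Icc 1 w, z0 i * g i ≤ (w : ℝ) := by
      calc ∑ i ∈ Icc 1 w, z0 i * g i ≤ ∑ i ∈ Icc 1 w, (1 : ℝ) := by
            apply Finset.sum_le_sum
            intro i hi
            rw [mem_Icc] at hi
            calc z0 i * g i ≤ |z0 i * g i| := le_abs_self _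
              _ = |z0 i| * |g i| := abs_mul _ _
              _ ≤ 1 * 1 := mul_le_mul (hz0bd i (by rw [mem_Icc]; omega))
                  (hg i (by rw [mem_Icc]; omega)) (abs_nonneg _)
                  (by norm_num)
              _ = 1 := by norm_num
        _ = (w : ℝ) := by rw [Finset.sum_const, Nat.card_Icc]; simp
    have hM : z0 (w + 1) * g (w + 1) ≤ c := by
      calc z0 (w + 1) * g (w + 1) ≤ |z0 (w + 1) * g (w + 1)| := le_abs_self _
        _ = |z0 (w + 1)| * |g (w + 1)| := abs_mul _ _
        _ ≤ c * 1 := mul_le_mul (le_of_eq hz0vabs)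
            (hg (w + 1) (by rw [mem_Icc]; omega)) (abs_nonneg _) hc0.le
        _ = c := by ring
    have hT : ∑ i ∈ Icc (w + 2) n, z0 i * g i ≤ 0 := by
      apply le_of_eq
      apply Finset.sum_eq_zero
      intro i hi
      rw [mem_Icc] at hi
      rw [hz0tail i (by omega), zero_mul]
    linarith
  -- payoff of any feasible z against g0 is at least V
  have hg0pay : ∀ z : ℕ → ℝ, (∀ i ∈ Icc 1 n, |z i| ≤ 1) →
      lam ≤ 1 / (n : ℝ) * ∑ i ∈ Icc 1 n, z i * a i →
      V ≤ 1 / (n : ℝ) * ∑ i ∈ Icc 1 n, z i * g0 i := by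
    intro z hz hzc
    have hcon : n * lam ≤ ∑ i ∈ Icc 1 n, z i * a i := by
      rw [one_div_mul_eq_div, le_div_iff₀ hn0] at hzc
      nlinarith
    have h3 : ∑ i ∈ Icc 1 n, z i * g0 i =
        ∑ i ∈ Icc 1 n, z i * (g0 i - a i / B) + (1 / B) * ∑ i ∈ Icc 1 n, z i * a i := by
      rw [Finset.mul_sum, ← Finset.sum_add_distrib]
      apply Finset.sum_congr rfl
      intro i _
      ring
    have h1 : ∑ i ∈ Icc 1 n, (if i < w + 1 then 1 - |a i| / B else 0) ≤
        ∑ i ∈ Icc 1 n, z i * (g0 i - a i / B) := by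
      apply Finset.sum_le_sum
      intro i hi
      rw [mem_Icc] at hi
      by_cases hlt : i < w + 1
      · simp only [if_pos hlt, hg0def]
        rw [hBdef]
        exact per_term (a i) (|a (w + 1)|) (z i) (by rw [hBdef] at hB0; exact hB0)
          (hord i (w + 1) hi.1 (by omega) hvn) (hz i (by rw [mem_Icc]; omega))
      · simp only [if_neg hlt, hg0def]
        rw [sub_self, mul_zero]
    have h2 : ∑ i ∈ Icc 1 n, (if i < w + 1 then 1 - |a i| / B else 0) =
        (w : ℝ) - S / B := by
      rw [split_sum n w hvn]
      have hA : ∑ i ∈ Icc 1 w, (if i < w + 1 then 1 - |a i| / B else 0) =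
          (w : ℝ) - S / B := by
        rw [Finset.sum_congr rfl (fun i hi => if_pos (by rw [mem_Icc] at hi; omega))]
        rw [Finset.sum_sub_distrib, Finset.sum_const, Nat.card_Icc, hSdef,
          ← Finset.sum_div]
        simp
      rw [hA, if_neg (lt_irrefl (w + 1))]
      have hT : ∑ i ∈ Icc (w + 2) n, (if i < w + 1 then (1 : ℝ) - |a i| / B else 0) = 0 := by
        apply Finset.sum_eq_zero
        intro i hi
        rw [mem_Icc] at hi
        exact if_neg (by omega)
      rw [hT]; ring
    have hfin : (n : ℝ) * V ≤ ∑ i ∈ Icc 1 n, z i * g0 i := by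
      have hBinv : (0 : ℝ) ≤ 1 / B := by positivity
      have hmul : (1 / B) * (n * lam) ≤ (1 / B) * ∑ i ∈ Icc 1 n, z i * a i :=
        mul_le_mul_of_nonneg_left hcon hBinv
      have hnV : (n : ℝ) * V = (w : ℝ) - S / B + (1 / B) * (n * lam) := by
        rw [hVc, hcdef]
        field_simp
        ring
      rw [hnV, h3]
      linarith
    rw [one_div_mul_eq_div, le_div_iff₀ hn0]
    nlinarith
  -- bounded below
  have hbddT : ∀ g : ℕ → ℝ, (∀ i ∈ Icc 1 n, |g i| ≤ 1) →
      BddBelow {y : ℝ | ∃ z : ℕ → ℝ, (∀ i ∈ Icc 1 n, |z i| ≤ 1) ∧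
      lam ≤ (1 / (n : ℝ)) * ∑ i ∈ Icc 1 n, z i * a i ∧
      y = (1 / (n : ℝ)) * ∑ i ∈ Icc 1 n, z i * g i} := by
    intro g hg
    refine ⟨-1, ?_⟩
    rintro y ⟨z, hz, -, rfl⟩
    have h4 : ∑ i ∈ Icc 1 n, (1 : ℝ) = n := by
      rw [Finset.sum_const, Nat.card_Icc]; simp
    have habs : |∑ i ∈ Icc 1 n, z i * g i| ≤ (n : ℝ) := by
      calc |∑ i ∈ Icc 1 n, z i * g i| ≤ ∑ i ∈ Icc 1 n, |z i * g i| :=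
            Finset.abs_sum_le_sum_abs _ _
        _ ≤ ∑ i ∈ Icc 1 n, (1 : ℝ) := by
            apply Finset.sum_le_sum
            intro i hi
            rw [abs_mul]
            exact mul_le_one₀ (hz i hi) (abs_nonneg _) (hg i hi)
        _ = (n : ℝ) := h4
    have hb : -(n : ℝ) ≤ ∑ i ∈ Icc 1 n, z i * g i := (abs_le.mp habs).1
    have he : (1 / (n : ℝ)) * (-(n : ℝ)) = -1 := by field_simp
    have := mul_le_mul_of_nonneg_left hb (by positivity : (0 : ℝ) ≤ 1 / (n : ℝ))
    calc (-1 : ℝ) = (1 / (n : ℝ)) * (-(n : ℝ)) := he.symm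
      _ ≤ (1 / (n : ℝ)) * ∑ i ∈ Icc 1 n, z i * g i := this
  -- inner inf is at most V for every admissible g
  have hub : ∀ g : ℕ → ℝ, (∀ i ∈ Icc 1 n, |g i| ≤ 1) →
      sInf {y : ℝ | ∃ z : ℕ → ℝ, (∀ i ∈ Icc 1 n, |z i| ≤ 1) ∧
          lam ≤ (1 / (n : ℝ)) * ∑ i ∈ Icc 1 n, z i * a i ∧
          y = (1 / (n : ℝ)) * ∑ i ∈ Icc 1 n, z i * g i} ≤ V := by
    intro g hg
    have hmem : (1 / (n : ℝ)) * ∑ i ∈ Icc 1 n, z0 i * g i ∈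
        {y : ℝ | ∃ z : ℕ → ℝ, (∀ i ∈ Icc 1 n, |z i| ≤ 1) ∧
          lam ≤ (1 / (n : ℝ)) * ∑ i ∈ Icc 1 n, z i * a i ∧
          y = (1 / (n : ℝ)) * ∑ i ∈ Icc 1 n, z i * g i} := ⟨z0, hz0bd, hz0feas, rfl⟩
    calc sInf _ ≤ (1 / (n : ℝ)) * ∑ i ∈ Icc 1 n, z0 i * g i := csInf_le (hbddT g hg) hmem
      _ ≤ V := by
          rw [hVc, one_div_mul_eq_div]
          gcongr
          exact hz0pay g hg
  -- the inf for g0 is at least V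
  have hlb : V ≤ sInf {y : ℝ | ∃ z : ℕ → ℝ, (∀ i ∈ Icc 1 n, |z i| ≤ 1) ∧
      lam ≤ (1 / (n : ℝ)) * ∑ i ∈ Icc 1 n, z i * a i ∧
      y = (1 / (n : ℝ)) * ∑ i ∈ Icc 1 n, z i * g0 i} := by
    apply le_csInf
    · exact ⟨(1 / (n : ℝ)) * ∑ i ∈ Icc 1 n, z0 i * g0 i, z0, hz0bd, hz0feas, rfl⟩
    · rintro y ⟨z, hz, hzc, rfl⟩
      exact hg0pay z hz hzc
  apply le_antisymm
  · apply csSup_le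
    · exact ⟨_, g0, hg0bd, rfl⟩
    · rintro x ⟨g, hg, rfl⟩
      exact hub g hg
  · refine le_trans hlb (le_csSup ⟨V, ?_⟩ ⟨g0, hg0bd, rfl⟩)
    rintro x ⟨g, hg, rfl⟩
    exact hub g hg
end

section
/- The minimum normalized ℓ1-norm of a feasible label vector equals the game value: inf_{z ∈ Z} (1/n)·∑_{i=1}^n |z_i| = V, and the infimum is attained. -/
open Finset

private lemma sign_mul_self' (x : ℝ) : Real.sign x * x = |x| := by
  rcases lt_trichotomy x 0 with h | h | h
  · rw [Real.sign_of_neg h, abs_of_neg h]; ring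
  · simp [h]
  · rw [Real.sign_of_pos h, abs_of_pos h]; ring

private lemma abs_sign_le' (x : ℝ) : |Real.sign x| ≤ 1 := by
  rcases lt_trichotomy x 0 with h | h | h
  · rw [Real.sign_of_neg h]; norm_num
  · simp [h]
  · rw [Real.sign_of_pos h]; norm_num

private lemma abs_sign_of_ne' (x : ℝ) (h : x ≠ 0) : |Real.sign x| = 1 := by
  rcases lt_trichotomy x 0 with h' | h' | h'
  · rw [Real.sign_of_neg h']; norm_num
  · exact absurd h' h
  · rw [Real.sign_of_pos h']; norm_num

/-- The minimum normalized ℓ1-norm of a feasible label vector equals the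
game value V, and the infimum is attained. -/
theorem min_l1_feasible_eq_V
    (n : ℕ) (hn : 1 ≤ n) (a : ℕ → ℝ)
    (hord : ∀ i j : ℕ, 1 ≤ i → i ≤ j → j ≤ n → |a j| ≤ |a i|)
    (lam : ℝ) (hlam_pos : 0 < lam)
    (hlam_le : lam ≤ (1 / (n : ℝ)) * ∑ i ∈ Icc 1 n, |a i|)
    (v : ℕ) (hv1 : 1 ≤ v) (hvn : v ≤ n)
    (hv_ge : lam ≤ (1 / (n : ℝ)) * ∑ j ∈ Icc 1 v, |a j|)
    (hv_min : ∀ i : ℕ, 1 ≤ i → i < v → (1 / (n : ℝ)) * ∑ j ∈ Icc 1 i, |a j| < lam)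
    (V : ℝ)
    (hV : V = ((v : ℝ) - 1) / n +
        (lam - (1 / (n : ℝ)) * ∑ i ∈ Icc 1 (v - 1), |a i|) / |a v|) :
    sInf {y : ℝ | ∃ z : ℕ → ℝ, (∀ i ∈ Icc 1 n, |z i| ≤ 1) ∧
        lam ≤ (1 / (n : ℝ)) * ∑ i ∈ Icc 1 n, z i * a i ∧
        y = (1 / (n : ℝ)) * ∑ i ∈ Icc 1 n, |z i|} = V ∧
    (∃ z : ℕ → ℝ, (∀ i ∈ Icc 1 n, |z i| ≤ 1) ∧
        lam ≤ (1 / (n : ℝ)) * ∑ i ∈ Icc 1 n, z i * a i ∧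
        (1 / (n : ℝ)) * ∑ i ∈ Icc 1 n, |z i| = V) := by
  have hnpos : (0:ℝ) < n := by exact_mod_cast Nat.lt_of_lt_of_le Nat.zero_lt_one hn
  have hnne : (n:ℝ) ≠ 0 := ne_of_gt hnpos
  -- sum splitting lemmas
  have hsplitv : ∀ f : ℕ → ℝ, ∑ i ∈ Icc 1 v, f i = ∑ i ∈ Icc 1 (v-1), f i + f v := by
    intro f
    rw [(show Icc 1 v = Ioc 0 v from Finset.Icc_add_one_left_eq_Ioc 0 v), (show Icc 1 (v-1) = Ioc 0 (v-1) from Finset.Icc_add_one_left_eq_Ioc 0 (v-1)),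
      ← Finset.sum_Ioc_consecutive f (Nat.zero_le (v-1)) (Nat.sub_le v 1)]
    have hIoc : Ioc (v-1) v = {v} := by ext i; simp [Finset.mem_Ioc]; omega
    rw [hIoc, Finset.sum_singleton]
  have hsplit : ∀ f : ℕ → ℝ, ∑ i ∈ Icc 1 n, f i
      = ∑ i ∈ Icc 1 (v-1), f i + f v + ∑ i ∈ Ioc v n, f i := by
    intro f
    rw [(show Icc 1 n = Ioc 0 n from Finset.Icc_add_one_left_eq_Ioc 0 n), ← Finset.sum_Ioc_consecutive f (Nat.zero_le v) hvn,
      ← (show Icc 1 v = Ioc 0 v from Finset.Icc_add_one_left_eq_Ioc 0 v), hsplitv f]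
  set S := ∑ i ∈ Icc 1 (v-1), |a i| with hSdef
  have hSn : lam * n ≤ S + |a v| := by
    have h := hv_ge
    rw [hsplitv (fun i => |a i|)] at h
    rw [one_div, inv_mul_eq_div] at h
    have := (le_div_iff₀ hnpos).mp h
    linarith
  have hSlt : S < lam * n := by
    rcases Nat.lt_or_ge 1 v with h2 | h2
    · have h := hv_min (v-1) (by omega) (by omega)
      rw [one_div, inv_mul_eq_div] at h
      have := (div_lt_iff₀ hnpos).mp h
      linarith
    · have hve : v = 1 := le_antisymm h2 hv1
      have : S = 0 := by rw [hSdef, hve]; simp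
      rw [this]
      exact mul_pos hlam_pos hnpos
  have hav : 0 < |a v| := by linarith
  have havne : a v ≠ 0 := abs_ne_zero.mp (ne_of_gt hav)
  set t : ℝ := (lam * n - S) / |a v| with htdef
  have ht0 : 0 ≤ t := div_nonneg (by linarith) hav.le
  have ht1 : t ≤ 1 := (div_le_one hav).mpr (by linarith)
  have ht' : t * |a v| = lam * n - S := div_mul_cancel₀ _ (ne_of_gt hav)
  set z : ℕ → ℝ := fun i => if i < v then Real.sign (a i)
    else if i = v then t * Real.sign (a v) else 0 with hz
  have hzabs_le : ∀ i ∈ Icc 1 n, |z i| ≤ 1 := by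
    intro i _
    by_cases h : i < v
    · simp only [hz, if_pos h]; exact abs_sign_le' _
    · by_cases h' : i = v
      · simp only [hz, if_neg h, if_pos h']
        rw [abs_mul, abs_of_nonneg ht0]
        have := abs_sign_le' (a v)
        have := abs_nonneg (Real.sign (a v))
        nlinarith
      · simp [hz, h, h']
  have hza : ∑ i ∈ Icc 1 n, z i * a i = lam * n := by
    rw [hsplit (fun i => z i * a i)]
    have h1 : ∑ i ∈ Icc 1 (v-1), z i * a i = S := by
      apply Finset.sum_congr rfl
      intro i hi
      rw [mem_Icc] at hi
      have hiv : i < v := by omega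
      simp only [hz, if_pos hiv]
      exact sign_mul_self' (a i)
    have h2 : z v * a v = t * |a v| := by
      have hzv : z v = t * Real.sign (a v) := by simp [hz]
      rw [hzv, mul_assoc, sign_mul_self']
    have h3 : ∑ i ∈ Ioc v n, z i * a i = 0 := by
      apply Finset.sum_eq_zero
      intro i hi
      rw [mem_Ioc] at hi
      simp only [hz, if_neg (by omega : ¬ i < v), if_neg (by omega : ¬ i = v), zero_mul]
    rw [h1, h2, h3, ht']
    ring
  have hzabs : ∑ i ∈ Icc 1 n, |z i| = ((v:ℝ) - 1) + t := by
    rw [hsplit (fun i => |z i|)]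
    have h1 : ∑ i ∈ Icc 1 (v-1), |z i| = (v:ℝ) - 1 := by
      have hone : ∀ i ∈ Icc 1 (v-1), |z i| = 1 := by
        intro i hi
        rw [mem_Icc] at hi
        have hiv : i < v := by omega
        have hai : a i ≠ 0 := by
          have h := hord i v hi.1 (by omega) hvn
          exact abs_ne_zero.mp (ne_of_gt (lt_of_lt_of_le hav h))
        simp only [hz, if_pos hiv]
        exact abs_sign_of_ne' _ hai
      rw [Finset.sum_congr rfl hone, Finset.sum_const, nsmul_eq_mul, mul_one, Nat.card_Icc]
      have hcard : v - 1 + 1 - 1 = v - 1 := by omega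
      rw [hcard, Nat.cast_sub hv1, Nat.cast_one]
    have h2 : |z v| = t := by
      have hzv : z v = t * Real.sign (a v) := by simp [hz]
      rw [hzv, abs_mul, abs_of_nonneg ht0, abs_sign_of_ne' _ havne, mul_one]
    have h3 : ∑ i ∈ Ioc v n, |z i| = 0 := by
      apply Finset.sum_eq_zero
      intro i hi
      rw [mem_Ioc] at hi
      simp only [hz, if_neg (by omega : ¬ i < v), if_neg (by omega : ¬ i = v), abs_zero]
    rw [h1, h2, h3, add_zero]
  have hVt : V = (((v:ℝ) - 1) + t) / n := by
    rw [hV, htdef]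
    field_simp
  have hVmem : (1 / (n : ℝ)) * ∑ i ∈ Icc 1 n, |z i| = V := by
    rw [hzabs, hVt, one_div, inv_mul_eq_div]
  have hfeas : lam ≤ (1 / (n : ℝ)) * ∑ i ∈ Icc 1 n, z i * a i := by
    rw [hza]
    field_simp
    exact le_refl _
  -- lower bound
  have hlb : ∀ y ∈ {y : ℝ | ∃ z : ℕ → ℝ, (∀ i ∈ Icc 1 n, |z i| ≤ 1) ∧
      lam ≤ (1 / (n : ℝ)) * ∑ i ∈ Icc 1 n, z i * a i ∧
      y = (1 / (n : ℝ)) * ∑ i ∈ Icc 1 n, |z i|}, V ≤ y := by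
    rintro y ⟨w, hw1, hw2, rfl⟩
    set T := ∑ i ∈ Icc 1 n, |w i| with hTdef
    have step1 : lam * n ≤ ∑ i ∈ Icc 1 n, w i * a i := by
      rw [one_div, inv_mul_eq_div] at hw2
      have := (le_div_iff₀ hnpos).mp hw2
      linarith
    have step2 : ∑ i ∈ Icc 1 n, w i * a i ≤ ∑ i ∈ Icc 1 n, |w i| * |a i| :=
      Finset.sum_le_sum fun i _ => by rw [← abs_mul]; exact le_abs_self _
    have step3 : ∑ i ∈ Icc 1 n, |w i| * |a i|
        ≤ |a v| * T + (S - ((v:ℝ) - 1) * |a v|) := by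
      have hb : ∀ i ∈ Icc 1 n, |w i| * |a i|
          ≤ |w i| * |a v| + (if i ≤ v - 1 then |a i| - |a v| else 0) := by
        intro i hi
        rw [mem_Icc] at hi
        by_cases h : i ≤ v - 1
        · rw [if_pos h]
          have hle : |a v| ≤ |a i| := hord i v hi.1 (by omega) hvn
          have h1 := hw1 i (mem_Icc.mpr hi)
          have h0 := abs_nonneg (w i)
          nlinarith
        · rw [if_neg h, add_zero]
          have hle : |a i| ≤ |a v| := hord v i hv1 (by omega) hi.2
          exact mul_le_mul_of_nonneg_left hle (abs_nonneg _)
      have hsum := Finset.sum_le_sum hb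
      have hsplit2 : ∑ i ∈ Icc 1 n, (|w i| * |a v| + (if i ≤ v - 1 then |a i| - |a v| else 0))
          = |a v| * T + (S - ((v:ℝ) - 1) * |a v|) := by
        rw [Finset.sum_add_distrib]
        have e1 : ∑ i ∈ Icc 1 n, |w i| * |a v| = |a v| * T := by
          rw [hTdef, Finset.mul_sum]
          exact Finset.sum_congr rfl fun i _ => mul_comm _ _
        have e2 : ∑ i ∈ Icc 1 n, (if i ≤ v - 1 then |a i| - |a v| else 0)
            = S - ((v:ℝ) - 1) * |a v| := by
          rw [← Finset.sum_filter]
          have hfil : (Icc 1 n).filter (fun i => i ≤ v - 1) = Icc 1 (v-1) := by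
            ext i; simp only [mem_filter, mem_Icc]; omega
          rw [hfil, Finset.sum_sub_distrib, ← hSdef, Finset.sum_const, nsmul_eq_mul,
            Nat.card_Icc]
          have hcard : v - 1 + 1 - 1 = v - 1 := by omega
          rw [hcard, Nat.cast_sub hv1, Nat.cast_one]
        rw [e1, e2]
      linarith
    have hTge : ((v:ℝ) - 1) + t ≤ T := by
      have hkey : lam * n - S + ((v:ℝ) - 1) * |a v| ≤ |a v| * T := by linarith
      nlinarith [hav]
    rw [hVt, one_div, inv_mul_eq_div]
    gcongr
  constructor
  · apply le_antisymm
    · exact csInf_le ⟨V, fun y hy => hlb y hy⟩ ⟨z, hzabs_le, hfeas, hVmem.symm⟩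
    · exact le_csInf ⟨V, ⟨z, hzabs_le, hfeas, hVmem.symm⟩⟩ hlb
  · exact ⟨z, hzabs_le, hfeas, hVmem⟩
end

section
/- PAC-Bayes theorem: for every δ ∈ (0,1) and every prior q_0 on H, with probability at least 1 - δ over the draw of the i.i.d. sample S of size m from D, simultaneously for all distributions q on H absolutely continuous with respect to q_0: kl( E_{h∼q}[êrr_S(h)] ‖ E_{h∼q}[err(h)] ) ≤ (1/m)·(KL(q‖q_0) + log((m+1)/δ)). -/
open Finset MeasureTheory

/-- Binary KL divergence. -/
noncomputable def klBin (p r : ℝ) : ℝ :=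
  p * Real.log (p / r) + (1 - p) * Real.log ((1 - p) / (1 - r))

/-- KL divergence between two distributions on a finite set. -/
noncomputable def KLdiv {H : Type*} [Fintype H] (q q0 : H → ℝ) : ℝ :=
  ∑ h : H, q h * Real.log (q h / q0 h)

/-- True error of classifier `c h` under the data distribution `D`. -/
noncomputable def trueErr {X H : Type*} [MeasurableSpace X]
    (c : H → X → ℝ) (D : Measure (X × ℝ)) (h : H) : ℝ :=
  (D {p : X × ℝ | c h p.1 ≠ p.2}).toReal

/-- Empirical error of classifier `c h` on a sample `S` of size `m`. -/
noncomputable def empErr {X H : Type*} (c : H → X → ℝ) (m : ℕ)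
    (S : Fin m → X × ℝ) (h : H) : ℝ :=
  (1 / (m : ℝ)) * ∑ k : Fin m, if c h (S k).1 ≠ (S k).2 then (1 : ℝ) else 0

/-- Log-sum inequality with Lean junk conventions. -/
lemma log_sum_ineq {ι : Type*} (s : Finset ι) (a b : ι → ℝ)
    (ha : ∀ i ∈ s, 0 ≤ a i) (hb : ∀ i ∈ s, 0 ≤ b i)
    (hab : ∀ i ∈ s, b i = 0 → a i = 0) :
    (∑ i ∈ s, a i) * Real.log ((∑ i ∈ s, a i) / (∑ i ∈ s, b i)) ≤
      ∑ i ∈ s, a i * Real.log (a i / b i) := by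
  classical
  set s' := s.filter (fun i => b i ≠ 0) with hs'
  have hbpos : ∀ i ∈ s', 0 < b i := by
    intro i hi
    rw [hs', mem_filter] at hi
    exact lt_of_le_of_ne (hb i hi.1) (Ne.symm hi.2)
  have hsa : ∑ i ∈ s', a i = ∑ i ∈ s, a i := by
    apply Finset.sum_filter_of_ne
    intro i hi hne
    exact fun h => hne (hab i hi h)
  have hsb : ∑ i ∈ s', b i = ∑ i ∈ s, b i := by
    apply Finset.sum_filter_of_ne
    intro i hi hne
    exact hne
  have hrhs : ∑ i ∈ s', a i * Real.log (a i / b i) = ∑ i ∈ s, a i * Real.log (a i / b i) := by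
    apply Finset.sum_filter_of_ne
    intro i hi hne h
    exact hne (by rw [hab i hi h]; ring)
  rw [← hsa, ← hsb, ← hrhs]
  by_cases hB : ∑ i ∈ s', b i = 0
  · have : s' = ∅ := by
      by_contra hne
      obtain ⟨i, hi⟩ := Finset.nonempty_iff_ne_empty.2 hne
      have := Finset.sum_pos' (fun j hj => (hbpos j hj).le) ⟨i, hi, hbpos i hi⟩
      linarith
    rw [this]
    simp
  · have hBpos : 0 < ∑ i ∈ s', b i :=
      lt_of_le_of_ne (Finset.sum_nonneg fun i hi => (hbpos i hi).le) (Ne.symm hB)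
    have hjen := Real.convexOn_mul_log.map_centerMass_le (t := s') (w := b)
      (p := fun i => a i / b i) (fun i hi => (hbpos i hi).le) hBpos
      (fun i hi => div_nonneg (ha i (Finset.mem_filter.1 hi).1) (hbpos i hi).le)
    rw [Finset.centerMass, Finset.centerMass] at hjen
    have hz : ∑ i ∈ s', b i • (a i / b i) = ∑ i ∈ s', a i := by
      apply Finset.sum_congr rfl
      intro i hi
      rw [smul_eq_mul, mul_div_cancel₀ _ (hbpos i hi).ne']
    rw [hz] at hjen
    set A := ∑ i ∈ s', a i
    set B := ∑ i ∈ s', b i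
    have hrw : ∑ i ∈ s', b i • ((fun x => x * Real.log x) ∘ fun i => a i / b i) i
        = ∑ i ∈ s', a i * Real.log (a i / b i) := by
      apply Finset.sum_congr rfl
      intro i hi
      simp only [Function.comp, smul_eq_mul]
      rw [← mul_assoc, mul_div_cancel₀ _ (hbpos i hi).ne']
    rw [hrw, smul_eq_mul, smul_eq_mul] at hjen
    rw [inv_mul_eq_div, inv_mul_eq_div, div_mul_eq_mul_div] at hjen
    rw [div_le_div_iff_of_pos_right hBpos] at hjen
    exact hjen

/-- Jensen for log on a finset. -/
lemma sum_log_le_log_sum {ι : Type*} (s : Finset ι) (w x : ι → ℝ)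
    (hw : ∀ i ∈ s, 0 ≤ w i) (hws : ∑ i ∈ s, w i = 1) (hx : ∀ i ∈ s, 0 < x i) :
    ∑ i ∈ s, w i * Real.log (x i) ≤ Real.log (∑ i ∈ s, w i * x i) := by
  have := (strictConcaveOn_log_Ioi.concaveOn).le_map_sum (t := s) (w := w) (p := x)
    hw hws hx
  simpa only [smul_eq_mul, Function.comp] using this

/-- Change of measure / Donsker–Varadhan upper bound, finite version. -/
lemma change_of_measure {H : Type*} [Fintype H] (q q0 g : H → ℝ)
    (hq : ∀ h, 0 ≤ q h) (hqs : ∑ h : H, q h = 1)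
    (hq0 : ∀ h, 0 ≤ q0 h) (hac : ∀ h, q0 h = 0 → q h = 0) :
    ∑ h : H, q h * g h ≤ KLdiv q q0 + Real.log (∑ h : H, q0 h * Real.exp (g h)) := by
  classical
  set s' : Finset H := univ.filter (fun h => q h ≠ 0) with hs'
  have hqpos : ∀ h ∈ s', 0 < q h := fun h hh =>
    lt_of_le_of_ne (hq h) (Ne.symm (mem_filter.1 hh).2)
  have hq0pos : ∀ h ∈ s', 0 < q0 h := by
    intro h hh
    rcases lt_or_eq_of_le (hq0 h) with h' | h'
    · exact h'
    · exact absurd (hac h h'.symm) (mem_filter.1 hh).2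
  have hsg : ∑ h ∈ s', q h * g h = ∑ h : H, q h * g h :=
    Finset.sum_filter_of_ne (by intro i _ hne h; exact hne (by rw [h]; ring))
  have hsq : ∑ h ∈ s', q h = 1 := by
    rw [← hqs]; exact Finset.sum_filter_of_ne (by intro i _ hne h; exact hne h)
  have hKL : ∑ h ∈ s', q h * Real.log (q h / q0 h) = KLdiv q q0 :=
    Finset.sum_filter_of_ne (by intro i _ hne h; exact hne (by rw [h]; ring))
  have key : ∑ h ∈ s', q h * Real.log (q0 h * Real.exp (g h) / q h)
      ≤ Real.log (∑ h ∈ s', q h * (q0 h * Real.exp (g h) / q h)) :=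
    sum_log_le_log_sum s' _ _ (fun i hi => hq i) hsq
      (fun i hi => div_pos (mul_pos (hq0pos i hi) (Real.exp_pos _)) (hqpos i hi))
  have hlhs : ∑ h ∈ s', q h * Real.log (q0 h * Real.exp (g h) / q h)
      = ∑ h ∈ s', (q h * g h - q h * Real.log (q h / q0 h)) := by
    apply Finset.sum_congr rfl
    intro i hi
    rw [Real.log_div (mul_pos (hq0pos i hi) (Real.exp_pos _)).ne' (hqpos i hi).ne',
      Real.log_mul (hq0pos i hi).ne' (Real.exp_pos _).ne', Real.log_exp,
      Real.log_div (hqpos i hi).ne' (hq0pos i hi).ne']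
    ring
  have hrhs : ∑ h ∈ s', q h * (q0 h * Real.exp (g h) / q h) = ∑ h ∈ s', q0 h * Real.exp (g h) := by
    apply Finset.sum_congr rfl
    intro i hi
    rw [mul_div_assoc']
    exact mul_div_cancel_left₀ _ (hqpos i hi).ne'
  have hmono : Real.log (∑ h ∈ s', q0 h * Real.exp (g h))
      ≤ Real.log (∑ h : H, q0 h * Real.exp (g h)) := by
    apply Real.log_le_log ?_ ?_
    · apply Finset.sum_pos' (fun i hi => mul_nonneg (hq0 i) (Real.exp_pos _).le)
      have : s'.Nonempty := by
        by_contra hne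
        rw [Finset.not_nonempty_iff_eq_empty] at hne
        rw [hne] at hsq
        simp at hsq
      obtain ⟨i, hi⟩ := this
      exact ⟨i, hi, mul_pos (hq0pos i hi) (Real.exp_pos _)⟩
    · exact Finset.sum_le_sum_of_subset_of_nonneg (Finset.subset_univ _)
        (fun i _ _ => mul_nonneg (hq0 i) (Real.exp_pos _).le)
  rw [hlhs, hrhs] at key
  rw [Finset.sum_sub_distrib, hsg, hKL] at key
  linarith [key.trans hmono]

lemma klBin_avg_le {H : Type*} [Fintype H] (q e p : H → ℝ)
    (hq : ∀ h, 0 ≤ q h) (hqs : ∑ h : H, q h = 1)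
    (he0 : ∀ h, 0 ≤ e h) (he1 : ∀ h, e h ≤ 1)
    (hp0 : ∀ h, 0 ≤ p h) (hp1 : ∀ h, p h ≤ 1)
    (h0 : ∀ h, p h = 0 → e h = 0) (h1 : ∀ h, p h = 1 → e h = 1) :
    klBin (∑ h : H, q h * e h) (∑ h : H, q h * p h) ≤ ∑ h : H, q h * klBin (e h) (p h) := by
  classical
  have hterm1 : (∑ h : H, q h * e h) * Real.log ((∑ h : H, q h * e h) / (∑ h : H, q h * p h))
      ≤ ∑ h : H, q h * (e h * Real.log (e h / p h)) := by
    have := log_sum_ineq Finset.univ (fun h => q h * e h) (fun h => q h * p h)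
      (fun i _ => mul_nonneg (hq i) (he0 i)) (fun i _ => mul_nonneg (hq i) (hp0 i))
      (fun i _ hz => by
        rcases mul_eq_zero.1 hz with h' | h'
        · rw [h', zero_mul]
        · rw [h0 i h', mul_zero])
    refine this.trans (le_of_eq (Finset.sum_congr rfl fun i _ => ?_))
    by_cases hqi : q i = 0
    · simp [hqi]
    · rw [mul_div_mul_left _ _ hqi]; ring
  have hterm2 : (1 - ∑ h : H, q h * e h) *
        Real.log ((1 - ∑ h : H, q h * e h) / (1 - ∑ h : H, q h * p h))
      ≤ ∑ h : H, q h * ((1 - e h) * Real.log ((1 - e h) / (1 - p h))) := by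
    have hA : ∑ h : H, q h * (1 - e h) = 1 - ∑ h : H, q h * e h := by
      simp_rw [mul_sub, mul_one, Finset.sum_sub_distrib, hqs]
    have hB : ∑ h : H, q h * (1 - p h) = 1 - ∑ h : H, q h * p h := by
      simp_rw [mul_sub, mul_one, Finset.sum_sub_distrib, hqs]
    have := log_sum_ineq Finset.univ (fun h => q h * (1 - e h)) (fun h => q h * (1 - p h))
      (fun i _ => mul_nonneg (hq i) (by linarith [he1 i]))
      (fun i _ => mul_nonneg (hq i) (by linarith [hp1 i]))
      (fun i _ hz => by
        rcases mul_eq_zero.1 hz with h' | h'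
        · rw [h', zero_mul]
        · rw [h1 i (by linarith : p i = 1), sub_self, mul_zero])
    rw [hA, hB] at this
    refine this.trans (le_of_eq (Finset.sum_congr rfl fun i _ => ?_))
    by_cases hqi : q i = 0
    · simp [hqi]
    · rw [mul_div_mul_left _ _ hqi]; ring
  have := add_le_add hterm1 hterm2
  rw [← Finset.sum_add_distrib] at this
  calc klBin (∑ h : H, q h * e h) (∑ h : H, q h * p h)
      ≤ ∑ h : H, (q h * (e h * Real.log (e h / p h)) +
          q h * ((1 - e h) * Real.log ((1 - e h) / (1 - p h)))) := this
    _ = ∑ h : H, q h * klBin (e h) (p h) := by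
        apply Finset.sum_congr rfl; intro h _; rw [klBin]; ring

open scoped Classical in
lemma pi_count_eq {Ω : Type*} [MeasurableSpace Ω] (D : Measure Ω) [IsProbabilityMeasure D]
    (m : ℕ) (E : Set Ω) (hE : MeasurableSet E) (k : ℕ) :
    Measure.pi (fun _ : Fin m => D)
      {S : Fin m → Ω | (Finset.univ.filter (fun i => S i ∈ E)).card = k}
      = (m.choose k : ENNReal) * D E ^ k * (D Eᶜ) ^ (m - k) := by
  classical
  set μ := Measure.pi (fun _ : Fin m => D)
  set C : Finset (Fin m) → Set (Fin m → Ω) :=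
    fun A => Set.pi Set.univ (fun i => if i ∈ A then E else Eᶜ) with hC
  have hCmeas : ∀ A, MeasurableSet (C A) := fun A =>
    MeasurableSet.pi (Set.countable_univ) (fun i _ => by
      by_cases h : i ∈ A <;> simp [hC, h, hE, hE.compl])
  have hmem : ∀ (S : Fin m → Ω) (A : Finset (Fin m)),
      S ∈ C A ↔ Finset.univ.filter (fun i => S i ∈ E) = A := by
    intro S A
    simp only [hC, Set.mem_pi, Set.mem_univ, forall_true_left]
    constructor
    · intro hS
      ext i
      simp only [mem_filter, mem_univ, true_and]
      constructor
      · intro hi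
        by_contra hiA
        have := hS i
        rw [if_neg hiA] at this
        exact this hi
      · intro hi
        have := hS i
        rwa [if_pos hi] at this
    · intro hfil i
      by_cases hi : i ∈ A
      · rw [if_pos hi]
        have := Finset.ext_iff.1 hfil i
        simp only [mem_filter, mem_univ, true_and] at this
        exact this.2 hi
      · rw [if_neg hi]
        have := Finset.ext_iff.1 hfil i
        simp only [mem_filter, mem_univ, true_and] at this
        exact fun h => hi (this.1 h)
  have hset : {S : Fin m → Ω | (Finset.univ.filter (fun i => S i ∈ E)).card = k}
      = ⋃ A ∈ Finset.univ.powersetCard k, C A := by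
    ext S
    simp only [Set.mem_setOf_eq, Set.mem_iUnion]
    constructor
    · intro hS
      exact ⟨Finset.univ.filter (fun i => S i ∈ E),
        by rw [Finset.mem_powersetCard]; exact ⟨Finset.subset_univ _, hS⟩,
        (hmem S _).2 rfl⟩
    · rintro ⟨A, hA, hSA⟩
      rw [(hmem S A).1 hSA]
      exact (Finset.mem_powersetCard.1 hA).2
  have hCval : ∀ A ∈ Finset.univ.powersetCard k, μ (C A) = D E ^ k * (D Eᶜ) ^ (m - k) := by
    intro A hA
    have hcard : A.card = k := (Finset.mem_powersetCard.1 hA).2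
    rw [hC]
    rw [Measure.pi_pi]
    have : ∀ i : Fin m, D (if i ∈ A then E else Eᶜ) = if i ∈ A then D E else D Eᶜ :=
      fun i => apply_ite D _ _ _
    simp_rw [this]
    have h1 : ∏ i ∈ Finset.univ.filter (· ∈ A), (if i ∈ A then D E else D Eᶜ) = D E ^ k := by
      rw [Finset.prod_congr rfl (fun i hi => if_pos (Finset.mem_filter.1 hi).2),
        Finset.prod_const]
      congr 1
      rw [Finset.filter_mem_eq_inter, Finset.univ_inter, hcard]
    have h2 : ∏ i ∈ Finset.univ.filter (fun i => i ∉ A), (if i ∈ A then D E else D Eᶜ)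
        = D Eᶜ ^ (m - k) := by
      rw [Finset.prod_congr rfl (fun i hi => if_neg (Finset.mem_filter.1 hi).2),
        Finset.prod_const]
      congr 1
      have hAc : Finset.univ.filter (fun i => i ∉ A) = Aᶜ := by
        ext i; simp
      rw [hAc, Finset.card_compl, hcard, Fintype.card_fin]
    rw [← Finset.prod_filter_mul_prod_filter_not Finset.univ (· ∈ A), h1, h2]
  have hdisj : Set.PairwiseDisjoint ((Finset.univ.powersetCard k : Finset (Finset (Fin m))) : Set (Finset (Fin m))) C := by
    intro A hA B hB hAB
    refine Set.disjoint_left.2 fun S hSA hSB => ?_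
    rw [hmem S A] at hSA
    rw [hmem S B] at hSB
    exact hAB (hSA ▸ hSB ▸ rfl)
  rw [hset, measure_biUnion_finset hdisj (fun A _ => hCmeas A)]
  rw [Finset.sum_congr rfl hCval, Finset.sum_const, Finset.card_powersetCard, Finset.card_univ,
    Fintype.card_fin, nsmul_eq_mul, mul_assoc]

lemma binom_term_le_one (m k : ℕ) (hk : k ≤ m) (a : ℝ) (ha0 : 0 ≤ a) (ha1 : a ≤ 1) :
    (m.choose k : ℝ) * a ^ k * (1 - a) ^ (m - k) ≤ 1 := by
  have h := Commute.add_pow (Commute.all a (1 - a)) m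
  rw [add_sub_cancel, one_pow] at h
  have hterm : a ^ k * (1 - a) ^ (m - k) * (m.choose k : ℝ)
      ≤ ∑ j ∈ Finset.range (m + 1), a ^ j * (1 - a) ^ (m - j) * (m.choose j : ℝ) := by
    apply Finset.single_le_sum (f := fun j => a ^ j * (1 - a) ^ (m - j) * (m.choose j : ℝ))
    · intro j _
      exact mul_nonneg (mul_nonneg (pow_nonneg ha0 _)
        (pow_nonneg (by linarith) _)) (Nat.cast_nonneg _)
    · exact Finset.mem_range.2 (Nat.lt_succ_of_le hk)
  calc (m.choose k : ℝ) * a ^ k * (1 - a) ^ (m - k)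
      = a ^ k * (1 - a) ^ (m - k) * (m.choose k : ℝ) := by ring
    _ ≤ _ := hterm
    _ = 1 := h.symm

lemma binom_kl_bound (m k : ℕ) (hk : k ≤ m) (hm : 1 ≤ m) (p : ℝ) (hp0 : 0 ≤ p) (hp1 : p ≤ 1) :
    (m.choose k : ℝ) * p ^ k * (1 - p) ^ (m - k) *
      Real.exp ((m : ℝ) * klBin ((k : ℝ) / (m : ℝ)) p) ≤ 1 := by
  have hm0 : (m : ℝ) ≠ 0 := by positivity
  have hkm : (k : ℝ) ≤ (m : ℝ) := Nat.cast_le.2 hk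
  have hsub : ((m - k : ℕ) : ℝ) = (m : ℝ) - (k : ℝ) := by
    rw [Nat.cast_sub hk]
  have hone : 1 - (k : ℝ) / (m : ℝ) = ((m : ℝ) - k) / m := by
    field_simp
  have hexpand : (m : ℝ) * klBin ((k : ℝ) / (m : ℝ)) p
      = (k : ℝ) * Real.log (((k : ℝ) / m) / p)
        + ((m : ℝ) - k) * Real.log ((((m : ℝ) - k) / m) / (1 - p)) := by
    rw [klBin, hone]
    field_simp
  rw [hexpand, Real.exp_add]
  rw [← hsub, Real.exp_nat_mul, Real.exp_nat_mul, hsub]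
  have key : (m.choose k : ℝ) * p ^ k * (1 - p) ^ (m - k) *
      (Real.exp (Real.log (((k : ℝ) / m) / p)) ^ k *
       Real.exp (Real.log ((((m : ℝ) - k) / m) / (1 - p))) ^ (m - k))
      = (m.choose k : ℝ) * (p * Real.exp (Real.log (((k : ℝ) / m) / p))) ^ k *
        ((1 - p) * Real.exp (Real.log ((((m : ℝ) - k) / m) / (1 - p)))) ^ (m - k) := by
    rw [mul_pow, mul_pow]
    ring
  rw [key]
  -- bound each factor
  have hf1 : (p * Real.exp (Real.log (((k : ℝ) / m) / p))) ^ k ≤ ((k : ℝ) / m) ^ k := by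
    by_cases hp : p = 0
    · rcases Nat.eq_zero_or_pos k with hk0 | hk0
      · simp [hk0]
      · rw [hp, zero_mul, zero_pow (by omega)]
        positivity
    · have hppos : 0 < p := lt_of_le_of_ne hp0 (Ne.symm hp)
      rcases Nat.eq_zero_or_pos k with hk0 | hk0
      · simp [hk0]
      · have : ((k : ℝ) / m) / p > 0 := by positivity
        rw [Real.exp_log this, mul_div_cancel₀ _ hppos.ne']
  have hf2 : ((1 - p) * Real.exp (Real.log ((((m : ℝ) - k) / m) / (1 - p)))) ^ (m - k)
      ≤ (((m : ℝ) - k) / m) ^ (m - k) := by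
    by_cases hp : p = 1
    · rcases Nat.eq_zero_or_pos (m - k) with hk0 | hk0
      · simp [hk0]
      · rw [hp, sub_self, zero_mul, zero_pow (by omega)]
        have : (0:ℝ) ≤ ((m : ℝ) - k) / m := by
          apply div_nonneg (by linarith) (by positivity)
        positivity
    · have hppos : 0 < 1 - p := by
        rcases lt_or_eq_of_le hp1 with h | h
        · linarith
        · exact absurd h hp
      rcases Nat.eq_zero_or_pos (m - k) with hk0 | hk0
      · simp [hk0]
      · have hmk : (0:ℝ) < (m : ℝ) - k := by
          have : k < m := by omega
          have := Nat.cast_lt (α := ℝ).2 this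
          linarith
        have : (((m : ℝ) - k) / m) / (1 - p) > 0 := by positivity
        rw [Real.exp_log this, mul_div_cancel₀ _ hppos.ne']
  have hnn1 : 0 ≤ p * Real.exp (Real.log (((k : ℝ) / m) / p)) := by positivity
  have hnn2 : 0 ≤ (1 - p) * Real.exp (Real.log ((((m : ℝ) - k) / m) / (1 - p))) := by
    have : (0:ℝ) ≤ 1 - p := by linarith
    positivity
  calc (m.choose k : ℝ) * (p * Real.exp (Real.log (((k : ℝ) / m) / p))) ^ k *
        ((1 - p) * Real.exp (Real.log ((((m : ℝ) - k) / m) / (1 - p)))) ^ (m - k)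
      ≤ (m.choose k : ℝ) * ((k : ℝ) / m) ^ k * (((m : ℝ) - k) / m) ^ (m - k) := by
        apply mul_le_mul
        · apply mul_le_mul_of_nonneg_left hf1 (by positivity)
        · exact hf2
        · positivity
        · positivity
    _ ≤ 1 := by
        have := binom_term_le_one m k hk ((k : ℝ) / m) (by positivity)
          (by rw [div_le_one (by positivity)]; exact hkm)
        have heq : 1 - (k : ℝ) / m = ((m : ℝ) - k) / m := hone
        rwa [heq] at this

/-- the PAC-Bayes theorem. -/
theorem pac_bayes
    {X : Type*} [MeasurableSpace X] {H : Type*} [Fintype H] [Nonempty H]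
    (c : H → X → ℝ) (hc : ∀ h x, c h x = 1 ∨ c h x = -1)
    (hmeas : ∀ h, Measurable (c h))
    (D : Measure (X × ℝ)) [IsProbabilityMeasure D]
    (m : ℕ) (hm : 1 ≤ m)
    (δ : ℝ) (hδ0 : 0 < δ) (hδ1 : δ < 1)
    (q0 : H → ℝ) (hq0 : ∀ h, 0 ≤ q0 h) (hq0sum : ∑ h : H, q0 h = 1) :
    ENNReal.ofReal (1 - δ) ≤
      Measure.pi (fun _ : Fin m => D)
        {S : Fin m → X × ℝ |
          ∀ q : H → ℝ, (∀ h, 0 ≤ q h) → (∑ h : H, q h = 1) →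
            (∀ h, q0 h = 0 → q h = 0) →
            klBin (∑ h : H, q h * empErr c m S h) (∑ h : H, q h * trueErr c D h) ≤
              (1 / (m : ℝ)) * (KLdiv q q0 + Real.log ((m + 1) / δ))} := by
  classical
  have hm0 : (m : ℝ) ≠ 0 := by positivity
  have hmpos : (0:ℝ) < m := by positivity
  set μ := Measure.pi (fun _ : Fin m => D) with hμ
  haveI : IsProbabilityMeasure μ := by rw [hμ]; infer_instance
  set E : H → Set (X × ℝ) := fun h => {p : X × ℝ | c h p.1 ≠ p.2} with hEdef
  have hE : ∀ h, MeasurableSet (E h) := by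
    intro h
    have : E h = {p : X × ℝ | c h p.1 = p.2}ᶜ := by
      ext p; simp [hEdef]
    rw [this]
    exact (measurableSet_eq_fun ((hmeas h).comp measurable_fst) measurable_snd).compl
  set p : H → ℝ := fun h => trueErr c D h with hpdef
  have hp0 : ∀ h, 0 ≤ p h := fun h => ENNReal.toReal_nonneg
  have hp1 : ∀ h, p h ≤ 1 := by
    intro h
    have h1 : D (E h) ≤ 1 := prob_le_one
    have := ENNReal.toReal_mono ENNReal.one_ne_top h1
    exact this.trans (by simp)
  -- counting function
  set N : H → (Fin m → X × ℝ) → ℕ :=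
    fun h S => (Finset.univ.filter (fun i => S i ∈ E h)).card with hNdef
  have hNle : ∀ h S, N h S ≤ m := by
    intro h S
    calc N h S ≤ Finset.univ.card := Finset.card_filter_le _ _
      _ = m := by simp
  have hemp : ∀ h S, empErr c m S h = (N h S : ℝ) / m := by
    intro h S
    rw [empErr, hNdef]
    have hfil : Finset.univ.filter (fun k : Fin m => c h (S k).1 ≠ (S k).2)
        = Finset.univ.filter (fun i => S i ∈ E h) := by
      apply Finset.filter_congr
      intro i _
      simp [hEdef]
    rw [Finset.sum_boole, hfil, one_div, inv_mul_eq_div]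
  have hemp0 : ∀ h S, 0 ≤ empErr c m S h := by
    intro h S
    rw [hemp]
    positivity
  have hemp1 : ∀ h S, empErr c m S h ≤ 1 := by
    intro h S
    rw [hemp, div_le_one hmpos]
    exact_mod_cast hNle h S
  have hNmeas : ∀ h, Measurable (N h) := by
    intro h
    have : N h = fun S => ∑ i : Fin m, if S i ∈ E h then 1 else 0 := by
      funext S
      simp only [hNdef]
      rw [Finset.card_filter]
    rw [this]
    exact Finset.measurable_sum _ (fun i _ =>
      Measurable.ite ((measurable_pi_apply i) (hE h)) measurable_const measurable_const)
  have hNk : ∀ h k, MeasurableSet {S : Fin m → X × ℝ | N h S = k} :=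
    fun h k => (hNmeas h) (measurableSet_singleton k)
  have hempmeas : ∀ h, Measurable (fun S => empErr c m S h) := by
    intro h
    have : (fun S => empErr c m S h) = fun S => ((N h S : ℝ)) / m := by
      funext S; exact hemp h S
    rw [this]
    exact (measurable_from_top.comp (hNmeas h)).div_const _
  -- the exponential moment function
  set t : ℝ := ((m : ℝ) + 1) / δ with ht
  have htpos : 0 < t := by rw [ht]; positivity
  set f : (Fin m → X × ℝ) → ℝ :=
    fun S => ∑ h : H, q0 h * Real.exp ((m : ℝ) * klBin (empErr c m S h) (p h)) with hf
  have hfnonneg : ∀ S, 0 ≤ f S := by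
    intro S
    apply Finset.sum_nonneg
    intro h _
    exact mul_nonneg (hq0 h) (Real.exp_pos _).le
  have hklmeas : ∀ h, Measurable (fun S => klBin (empErr c m S h) (p h)) := by
    intro h
    have : (fun S => klBin (empErr c m S h) (p h))
        = fun S => empErr c m S h * Real.log (empErr c m S h / p h)
          + (1 - empErr c m S h) * Real.log ((1 - empErr c m S h) / (1 - p h)) := by
      funext S; rw [klBin]
    rw [this]
    exact (((hempmeas h).mul (((hempmeas h).div_const _).log))).add
      (((measurable_const.sub (hempmeas h))).mul
        (((measurable_const.sub (hempmeas h)).div_const _).log))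
  have hfmeas : Measurable f := by
    rw [hf]
    exact Finset.measurable_sum _ (fun h _ =>
      ((((hklmeas h).const_mul ((m:ℝ))).exp).const_mul (q0 h)))
  -- per-hypothesis decomposition of the exponential moment
  have hterm_eq : ∀ h S, Real.exp ((m:ℝ) * klBin (empErr c m S h) (p h))
      = ∑ k ∈ Finset.range (m+1),
          if N h S = k then Real.exp ((m:ℝ) * klBin ((k:ℝ)/(m:ℝ)) (p h)) else 0 := by
    intro h S
    rw [Finset.sum_ite_eq (Finset.range (m+1)) (N h S)
      (fun k => Real.exp ((m:ℝ) * klBin ((k:ℝ)/(m:ℝ)) (p h)))]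
    rw [if_pos (Finset.mem_range.2 (Nat.lt_succ_of_le (hNle h S))), hemp]
  have hind : ∀ (h : H) (k : ℕ) (ck : ℝ),
      (fun S : Fin m → X × ℝ => if N h S = k then ck else 0)
      = Set.indicator {S : Fin m → X × ℝ | N h S = k} (fun _ => ck) := by
    intro h k ck
    funext S
    rw [Set.indicator_apply]
    rfl
  have hint_term : ∀ h,
      Integrable (fun S => Real.exp ((m:ℝ) * klBin (empErr c m S h) (p h))) μ := by
    intro h
    have heq : (fun S => Real.exp ((m:ℝ) * klBin (empErr c m S h) (p h)))
        = fun S => ∑ k ∈ Finset.range (m+1),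
            (if N h S = k then Real.exp ((m:ℝ) * klBin ((k:ℝ)/(m:ℝ)) (p h)) else 0) :=
      funext (hterm_eq h)
    rw [heq]
    apply integrable_finset_sum
    intro k _
    rw [hind h k]
    exact (integrable_const _).indicator (hNk h k)
  -- the binomial law and per-term bound
  have hlaw : ∀ h k, (μ {S : Fin m → X × ℝ | N h S = k}).toReal
      = (m.choose k : ℝ) * (p h) ^ k * (1 - p h) ^ (m - k) := by
    intro h k
    have hcompl : D (E h)ᶜ = 1 - D (E h) := by
      rw [measure_compl (hE h) (measure_ne_top _ _), measure_univ]
    have key : μ {S : Fin m → X × ℝ | N h S = k}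
        = (m.choose k : ENNReal) * D (E h) ^ k * (D (E h)ᶜ) ^ (m - k) := by
      rw [hμ]
      convert pi_count_eq D m (E h) (hE h) k using 2
      ext S
      simp only [hNdef, Set.mem_setOf_eq]
      congr!
    rw [key, hcompl]
    rw [ENNReal.toReal_mul, ENNReal.toReal_mul, ENNReal.toReal_pow, ENNReal.toReal_pow,
      ENNReal.toReal_natCast]
    congr 2
    rw [ENNReal.toReal_sub_of_le prob_le_one ENNReal.one_ne_top, ENNReal.toReal_one]
    rfl
  have hint_le : ∀ h, ∫ S, Real.exp ((m:ℝ) * klBin (empErr c m S h) (p h)) ∂μ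
      ≤ (m:ℝ) + 1 := by
    intro h
    have heq : (fun S => Real.exp ((m:ℝ) * klBin (empErr c m S h) (p h)))
        = fun S => ∑ k ∈ Finset.range (m+1),
            (if N h S = k then Real.exp ((m:ℝ) * klBin ((k:ℝ)/(m:ℝ)) (p h)) else 0) :=
      funext (hterm_eq h)
    rw [heq]
    rw [integral_finset_sum _ (fun k _ => by
      rw [hind h k]
      exact (integrable_const _).indicator (hNk h k))]
    have hbound : ∀ k ∈ Finset.range (m+1),
        (∫ S, (if N h S = k then Real.exp ((m:ℝ) * klBin ((k:ℝ)/(m:ℝ)) (p h)) else 0) ∂μ)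
        ≤ 1 := by
      intro k hk
      rw [hind h k, integral_indicator_const _ (hNk h k), smul_eq_mul, measureReal_def, hlaw h k]
      have := binom_kl_bound m k (Nat.lt_succ_iff.1 (Finset.mem_range.1 hk)) hm (p h)
        (hp0 h) (hp1 h)
      linarith [this]
    calc (∑ k ∈ Finset.range (m+1),
          ∫ S, (if N h S = k then Real.exp ((m:ℝ) * klBin ((k:ℝ)/(m:ℝ)) (p h)) else 0) ∂μ)
        ≤ ∑ k ∈ Finset.range (m+1), (1:ℝ) := Finset.sum_le_sum hbound
      _ = (m:ℝ) + 1 := by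
          rw [Finset.sum_const, Finset.card_range, nsmul_eq_mul, mul_one]
          push_cast
          ring
  have hfint : Integrable f μ := by
    rw [hf]
    apply integrable_finset_sum
    intro h _
    exact (hint_term h).const_mul _
  have hfintle : ∫ S, f S ∂μ ≤ (m:ℝ) + 1 := by
    rw [hf]
    rw [integral_finset_sum _ (fun h _ => (hint_term h).const_mul _)]
    calc (∑ h : H, ∫ S, q0 h * Real.exp ((m:ℝ) * klBin (empErr c m S h) (p h)) ∂μ)
        = ∑ h : H, q0 h * ∫ S, Real.exp ((m:ℝ) * klBin (empErr c m S h) (p h)) ∂μ := by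
          apply Finset.sum_congr rfl
          intro h _
          rw [integral_const_mul]
      _ ≤ ∑ h : H, q0 h * ((m:ℝ) + 1) := by
          apply Finset.sum_le_sum
          intro h _
          exact mul_le_mul_of_nonneg_left (hint_le h) (hq0 h)
      _ = (m:ℝ) + 1 := by
          rw [← Finset.sum_mul, hq0sum, one_mul]
  -- Markov
  have hmarkov : μ {S | t ≤ f S} ≤ ENNReal.ofReal δ := by
    have h1 := mul_meas_ge_le_integral_of_nonneg (μ := μ)
      (Filter.Eventually.of_forall hfnonneg) hfint t
    have h2 : (μ {S | t ≤ f S}).toReal ≤ δ := by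
      have h3 : t * (μ {S | t ≤ f S}).toReal ≤ (m:ℝ) + 1 := h1.trans hfintle
      have h4 : (μ {S | t ≤ f S}).toReal ≤ ((m:ℝ) + 1) / t :=
        (le_div_iff₀' htpos).2 h3
      have h5 : ((m:ℝ) + 1) / t = δ := by
        rw [ht]
        field_simp
      linarith
    exact (ENNReal.le_ofReal_iff_toReal_le (measure_ne_top μ _) hδ0.le).2 h2
  -- null events
  have heval : ∀ (i : Fin m) (A : Set (X × ℝ)), MeasurableSet A →
      μ ((fun S : Fin m → X × ℝ => S i) ⁻¹' A) = D A := by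
    intro i A hA
    have hseteq : ((fun S : Fin m → X × ℝ => S i) ⁻¹' A)
        = Set.pi Set.univ (fun j => if j = i then A else Set.univ) := by
      ext S
      simp only [Set.mem_preimage, Set.mem_pi, Set.mem_univ, forall_true_left]
      constructor
      · intro hS j
        by_cases hj : j = i
        · rw [if_pos hj, hj]; exact hS
        · rw [if_neg hj]; trivial
      · intro hS
        have := hS i
        rwa [if_pos rfl] at this
    rw [hμ, hseteq, Measure.pi_pi]
    have : ∀ j : Fin m, D (if j = i then A else Set.univ) = if j = i then D A else 1 := by
      intro j
      by_cases hj : j = i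
      · rw [if_pos hj, if_pos hj]
      · rw [if_neg hj, if_neg hj, measure_univ]
    simp_rw [this]
    rw [Finset.prod_ite_eq' Finset.univ i (fun _ => D A), if_pos (Finset.mem_univ i)]
  have hbad0 : ∀ h, μ {S | p h = 0 ∧ empErr c m S h ≠ 0} = 0 := by
    intro h
    by_cases hph : p h = 0
    · have hDE : D (E h) = 0 := by
        have := (ENNReal.toReal_eq_zero_iff _).1 hph
        rcases this with h' | h'
        · exact h'
        · exact absurd h' (measure_ne_top _ _)
      apply measure_mono_null (t := ⋃ i : Fin m, (fun S : Fin m → X × ℝ => S i) ⁻¹' E h)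
      · intro S hS
        obtain ⟨_, hS2⟩ := hS
        by_contra hnot
        simp only [Set.mem_iUnion, Set.mem_preimage] at hnot
        push_neg at hnot
        apply hS2
        rw [hemp]
        simp only [hNdef]
        have : Finset.univ.filter (fun i => S i ∈ E h) = ∅ := by
          apply Finset.filter_false_of_mem
          intro i _
          exact hnot i
        rw [this]
        simp
      · apply measure_iUnion_null
        intro i
        rw [heval i (E h) (hE h), hDE]
    · have : {S : Fin m → X × ℝ | p h = 0 ∧ empErr c m S h ≠ 0} = ∅ := by
        ext S; simp [hph]
      rw [this]
      simp
  have hbad1 : ∀ h, μ {S | p h = 1 ∧ empErr c m S h ≠ 1} = 0 := by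
    intro h
    by_cases hph : p h = 1
    · have hDE : D (E h) = 1 := by
        have h' : (D (E h)).toReal = 1 := hph
        rwa [ENNReal.toReal_eq_one_iff] at h'
      have hDEc : D (E h)ᶜ = 0 := by
        rw [measure_compl (hE h) (measure_ne_top _ _), measure_univ, hDE, tsub_self]
      apply measure_mono_null (t := ⋃ i : Fin m, (fun S : Fin m → X × ℝ => S i) ⁻¹' (E h)ᶜ)
      · intro S hS
        obtain ⟨_, hS2⟩ := hS
        by_contra hnot
        simp only [Set.mem_iUnion, Set.mem_preimage, Set.mem_compl_iff] at hnot
        push_neg at hnot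
        apply hS2
        rw [hemp]
        simp only [hNdef]
        have : Finset.univ.filter (fun i => S i ∈ E h) = Finset.univ := by
          apply Finset.filter_true_of_mem
          intro i _
          exact hnot i
        rw [this]
        rw [Finset.card_univ, Fintype.card_fin, div_self hm0]
      · apply measure_iUnion_null
        intro i
        rw [heval i (E h)ᶜ (hE h).compl, hDEc]
    · have : {S : Fin m → X × ℝ | p h = 1 ∧ empErr c m S h ≠ 1} = ∅ := by
        ext S; simp [hph]
      rw [this]
      simp
  -- assemble
  set Bad : Set (Fin m → X × ℝ) :=
    (⋃ h, {S | p h = 0 ∧ empErr c m S h ≠ 0}) ∪ ⋃ h, {S | p h = 1 ∧ empErr c m S h ≠ 1}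
    with hBad
  have hBadnull : μ Bad = 0 := by
    rw [hBad]
    apply measure_union_null
    · exact measure_iUnion_null hbad0
    · exact measure_iUnion_null hbad1
  have hsubset : {S | t ≤ f S}ᶜ \ Bad ⊆
      {S : Fin m → X × ℝ |
        ∀ q : H → ℝ, (∀ h, 0 ≤ q h) → (∑ h : H, q h = 1) →
          (∀ h, q0 h = 0 → q h = 0) →
          klBin (∑ h : H, q h * empErr c m S h) (∑ h : H, q h * trueErr c D h) ≤
            (1 / (m : ℝ)) * (KLdiv q q0 + Real.log ((m + 1) / δ))} := by
    rintro S ⟨hSgood, hSBad⟩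
    simp only [Set.mem_compl_iff, Set.mem_setOf_eq, not_le] at hSgood
    intro q hq hqs hac
    -- admissibility
    have hadm0 : ∀ h, p h = 0 → empErr c m S h = 0 := by
      intro h hph
      by_contra hcon
      exact hSBad (Or.inl (Set.mem_iUnion.2 ⟨h, hph, hcon⟩))
    have hadm1 : ∀ h, p h = 1 → empErr c m S h = 1 := by
      intro h hph
      by_contra hcon
      exact hSBad (Or.inr (Set.mem_iUnion.2 ⟨h, hph, hcon⟩))
    have step1 := klBin_avg_le q (fun h => empErr c m S h) p hq hqs
      (fun h => hemp0 h S) (fun h => hemp1 h S) hp0 hp1 hadm0 hadm1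
    have step2 := change_of_measure q q0 (fun h => (m:ℝ) * klBin (empErr c m S h) (p h))
      hq hqs hq0 hac
    have hsum_eq : ∑ h : H, q h * ((m:ℝ) * klBin (empErr c m S h) (p h))
        = (m:ℝ) * ∑ h : H, q h * klBin (empErr c m S h) (p h) := by
      rw [Finset.mul_sum]
      apply Finset.sum_congr rfl
      intro h _
      ring
    have hfSpos : 0 < f S := by
      rw [hf]
      have hex : ∃ h : H, q0 h ≠ 0 := by
        by_contra hcon
        push_neg at hcon
        rw [Finset.sum_eq_zero (fun h _ => hcon h)] at hq0sum
        norm_num at hq0sum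
      obtain ⟨h0, hh0⟩ := hex
      apply Finset.sum_pos' (fun h _ => mul_nonneg (hq0 h) (Real.exp_pos _).le)
      exact ⟨h0, Finset.mem_univ h0,
        mul_pos (lt_of_le_of_ne (hq0 h0) (Ne.symm hh0)) (Real.exp_pos _)⟩
    have hlogle : Real.log (∑ h : H, q0 h *
          Real.exp ((m:ℝ) * klBin (empErr c m S h) (p h))) ≤ Real.log t := by
      apply Real.log_le_log hfSpos
      exact le_of_lt hSgood
    rw [hsum_eq] at step2
    have step3 : ∑ h : H, q h * klBin (empErr c m S h) (p h)
        ≤ (1/(m:ℝ)) * (KLdiv q q0 + Real.log ((↑m + 1) / δ)) := by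
      have h6 : (m:ℝ) * ∑ h : H, q h * klBin (empErr c m S h) (p h)
          ≤ KLdiv q q0 + Real.log ((↑m + 1) / δ) := by
        calc (m:ℝ) * ∑ h : H, q h * klBin (empErr c m S h) (p h)
            ≤ KLdiv q q0 + Real.log (∑ h : H, q0 h *
                Real.exp ((m:ℝ) * klBin (empErr c m S h) (p h))) := step2
          _ ≤ KLdiv q q0 + Real.log t := by linarith
          _ = KLdiv q q0 + Real.log ((↑m + 1) / δ) := by rw [ht]
      calc (∑ h : H, q h * klBin (empErr c m S h) (p h))
          = (1/(m:ℝ)) * ((m:ℝ) * ∑ h : H, q h * klBin (empErr c m S h) (p h)) := by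
            field_simp
        _ ≤ (1/(m:ℝ)) * (KLdiv q q0 + Real.log ((↑m + 1) / δ)) := by
            apply mul_le_mul_of_nonneg_left h6
            positivity
    exact step1.trans step3
  -- measure bound
  have hcompl_meas : MeasurableSet {S : Fin m → X × ℝ | t ≤ f S} :=
    hfmeas measurableSet_Ici
  calc ENNReal.ofReal (1 - δ)
      = 1 - ENNReal.ofReal δ := by
        rw [ENNReal.ofReal_sub 1 hδ0.le, ENNReal.ofReal_one]
    _ ≤ 1 - μ {S | t ≤ f S} := tsub_le_tsub_left hmarkov 1
    _ = μ ({S | t ≤ f S}ᶜ) := (prob_compl_eq_one_sub hcompl_meas).symm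
    _ = μ ({S | t ≤ f S}ᶜ \ Bad) := (measure_diff_null hBadnull).symm
    _ ≤ _ := measure_mono hsubset
end

section
/- Transfer of empirical error from training to test set: for every δ ∈ (0,1) and every prior q_0 on H, with probability at least 1 - δ over the independent i.i.d. draws of the training sample S of size m and the test sample T of size n from D (with n ≥ m ≥ 1), simultaneously for all distributions q on H absolutely continuous with respect to q_0: E_{h∼q}[êrr_T(h)] ≤ E_{h∼q}[êrr_S(h)] + ε(m,q,q_0,δ). -/
open Finset MeasureTheory

/-- The PAC-Bayes slack term ε(m, q, q₀, δ). -/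
noncomputable def epsPB {H : Type*} [Fintype H] (m : ℕ) (q q0 : H → ℝ) (δ : ℝ) : ℝ :=
  Real.sqrt ((2 / (m : ℝ)) * (KLdiv q q0 + Real.log (2 * (m + 1) / δ)))


lemma pb_aux_pos (p : ℝ) (hp0 : 0 ≤ p) (hp1 : p ≤ 1) (s : ℝ) :
    0 < 1 - p + p * Real.exp s := by
  rcases lt_or_eq_of_le hp1 with h | h
  · have : 0 ≤ p * Real.exp s := mul_nonneg hp0 (Real.exp_pos s).le
    linarith
  · subst h; simpa using Real.exp_pos s

lemma pb_bernoulli_mgf (p : ℝ) (hp0 : 0 ≤ p) (hp1 : p ≤ 1) (s : ℝ) :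
    1 + p * (Real.exp s - 1) ≤ Real.exp (s * p + s ^ 2 / 8) := by
  have hP : ∀ x : ℝ, 0 < 1 - p + p * Real.exp x := pb_aux_pos p hp0 hp1
  set φ : ℝ → ℝ := fun x => x * p + x ^ 2 / 8 - Real.log (1 - p + p * Real.exp x) with hφ
  set φ' : ℝ → ℝ := fun x => p + x / 4 - p * Real.exp x / (1 - p + p * Real.exp x) with hφ'
  have h1 : ∀ x : ℝ, HasDerivAt (fun x : ℝ => 1 - p + p * Real.exp x) (p * Real.exp x) x := by
    intro x
    simpa using ((Real.hasDerivAt_exp x).const_mul p).const_add (1 - p)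
  have hD : ∀ x, HasDerivAt φ (φ' x) x := by
    intro x
    have h2 : HasDerivAt (fun x : ℝ => Real.log (1 - p + p * Real.exp x))
        (p * Real.exp x / (1 - p + p * Real.exp x)) x := (h1 x).log (hP x).ne'
    have h3 : HasDerivAt (fun x : ℝ => x * p + x ^ 2 / 8) (p + x / 4) x := by
      have := ((hasDerivAt_id x).mul_const p).add ((hasDerivAt_pow 2 x).div_const 8)
      refine this.congr_deriv ?_
      ring
    have := h3.sub h2
    exact this
  have hD' : ∀ x, HasDerivAt φ'
      (1 / 4 - p * Real.exp x * (1 - p) / (1 - p + p * Real.exp x) ^ 2) x := by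
    intro x
    have hq : HasDerivAt (fun x : ℝ => p * Real.exp x / (1 - p + p * Real.exp x))
        ((p * Real.exp x * (1 - p + p * Real.exp x) -
          p * Real.exp x * (p * Real.exp x)) / (1 - p + p * Real.exp x) ^ 2) x :=
      ((Real.hasDerivAt_exp x).const_mul p).div (h1 x) (hP x).ne'
    have h3 : HasDerivAt (fun x : ℝ => p + x / 4) (1 / 4) x := by
      simpa using ((hasDerivAt_id x).div_const 4).const_add p
    have := h3.sub hq
    refine this.congr_deriv ?_
    rw [show p * Real.exp x * (1 - p + p * Real.exp x) - p * Real.exp x * (p * Real.exp x)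
      = p * Real.exp x * (1 - p) from by ring]
  have hφ'0 : φ' 0 = 0 := by
    simp [hφ', Real.exp_zero]
  have hmono' : Monotone φ' := by
    apply monotone_of_deriv_nonneg (fun x => (hD' x).differentiableAt)
    intro x
    rw [(hD' x).deriv]
    have hPx := hP x
    have ha : 0 ≤ p * Real.exp x := mul_nonneg hp0 (Real.exp_pos x).le
    have : p * Real.exp x * (1 - p) / (1 - p + p * Real.exp x) ^ 2 ≤ 1 / 4 := by
      rw [div_le_iff₀ (by positivity)]
      nlinarith [sq_nonneg (1 - p - p * Real.exp x)]
    linarith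
  have hcont : Continuous φ := by
    have : Differentiable ℝ φ := fun x => (hD x).differentiableAt
    exact this.continuous
  have hφ0 : φ 0 = 0 := by simp [hφ, Real.exp_zero]
  have hnonneg : ∀ x, 0 ≤ φ x := by
    intro x
    rcases le_total 0 x with hx | hx
    · have : MonotoneOn φ (Set.Ici 0) := by
        apply monotoneOn_of_deriv_nonneg (convex_Ici 0) hcont.continuousOn
        · intro y _
          exact (hD y).differentiableAt.differentiableWithinAt
        · intro y hy
          rw [(hD y).deriv]
          rw [interior_Ici] at hy
          have := hmono' (le_of_lt hy)
          rw [hφ'0] at this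
          exact this
      have := this (Set.self_mem_Ici) (Set.mem_Ici.2 hx) hx
      rwa [hφ0] at this
    · have : AntitoneOn φ (Set.Iic 0) := by
        apply antitoneOn_of_deriv_nonpos (convex_Iic 0) hcont.continuousOn
        · intro y _
          exact (hD y).differentiableAt.differentiableWithinAt
        · intro y hy
          rw [(hD y).deriv]
          rw [interior_Iic] at hy
          have := hmono' (le_of_lt hy)
          rw [hφ'0] at this
          exact this
      have := this (Set.mem_Iic.2 hx) (Set.self_mem_Iic) hx
      rwa [hφ0] at this
  have := hnonneg s
  have hlog : Real.log (1 - p + p * Real.exp s) ≤ s * p + s ^ 2 / 8 := by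
    simp only [hφ] at this
    linarith
  have := (Real.log_le_iff_le_exp (hP s)).1 hlog
  linarith


lemma pb_integrable_of_bound {α : Type*} [MeasurableSpace α] (μ : Measure α) [IsFiniteMeasure μ]
    {f : α → ℝ} (hf : Measurable f) (C : ℝ) (h : ∀ x, |f x| ≤ C) : Integrable f μ :=
  (integrable_const C).mono' hf.aestronglyMeasurable
    (Filter.Eventually.of_forall (by simpa using h))

lemma pb_mgf_single {Z : Type*} [MeasurableSpace Z] (ν : Measure Z) [IsProbabilityMeasure ν]
    (g : Z → ℝ) (hg : Measurable g) (h01 : ∀ z, g z = 0 ∨ g z = 1) (s : ℝ) :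
    ∫ z, Real.exp (s * g z) ∂ν ≤ Real.exp (s * (∫ z, g z ∂ν) + s ^ 2 / 8) := by
  have hgb : ∀ z, |g z| ≤ 1 := by intro z; rcases h01 z with h | h <;> simp [h]
  have hgi : Integrable g ν := pb_integrable_of_bound ν hg 1 hgb
  have hpt : ∀ z, Real.exp (s * g z) = 1 + (Real.exp s - 1) * g z := by
    intro z; rcases h01 z with h | h <;> simp [h]
  set p := ∫ z, g z ∂ν with hp
  have hint : ∫ z, Real.exp (s * g z) ∂ν = 1 + (Real.exp s - 1) * p := by
    simp_rw [hpt]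
    rw [integral_add (integrable_const 1) (hgi.const_mul _), integral_const, integral_const_mul]
    simp [hp]
  have hp0 : 0 ≤ p := integral_nonneg (fun z => by rcases h01 z with h | h <;> simp [h])
  have hp1 : p ≤ 1 := by
    have := integral_mono hgi (integrable_const 1)
      (fun z => by rcases h01 z with h | h <;> simp [h])
    simpa using this
  rw [hint]
  have h2 := pb_bernoulli_mgf p hp0 hp1 s
  calc 1 + (Real.exp s - 1) * p = 1 + p * (Real.exp s - 1) := by ring
  _ ≤ _ := h2

lemma pb_pi_pow {Z : Type*} [MeasurableSpace Z] (ν : Measure Z) [IsProbabilityMeasure ν]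
    (k : ℕ) (f : Z → ℝ) :
    ∫ x : Fin k → Z, ∏ i, f (x i) ∂(Measure.pi fun _ => ν) = (∫ z, f z ∂ν) ^ k := by
  letI : MeasureSpace Z := ⟨ν⟩
  haveI : SigmaFinite (volume : Measure Z) := by
    show SigmaFinite ν; infer_instance
  have hv : (Measure.pi fun _ : Fin k => ν) = (volume : Measure (Fin k → Z)) := by
    rw [volume_pi]; rfl
  rw [hv]
  have := MeasureTheory.integral_fintype_prod_eq_pow (ι := Fin k) f (μ := ν)
  rw [hv] at this; simpa using this

lemma pb_dv {H : Type*} [Fintype H] (q q0 f : H → ℝ)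
    (hq : ∀ h, 0 ≤ q h) (hqsum : ∑ h : H, q h = 1) (hq0 : ∀ h, 0 ≤ q0 h)
    (habs : ∀ h, q0 h = 0 → q h = 0) (K : ℝ)
    (hK : ∑ h : H, q0 h * Real.exp (f h) ≤ K) :
    ∑ h : H, q h * f h ≤ KLdiv q q0 + Real.log K := by
  classical
  set s := Finset.univ.filter (fun h : H => q h ≠ 0) with hs
  have hqpos : ∀ h ∈ s, 0 < q h := by
    intro h hh
    rcases (hq h).lt_or_eq with h' | h'
    · exact h'
    · exact absurd h'.symm (Finset.mem_filter.1 hh).2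
  have hq0pos : ∀ h ∈ s, 0 < q0 h := by
    intro h hh
    rcases (hq0 h).lt_or_eq with h' | h'
    · exact h'
    · exact absurd (habs h h'.symm) (Finset.mem_filter.1 hh).2
  have hsum_s : ∑ h ∈ s, q h = 1 := by
    rw [← hqsum]
    exact Finset.sum_filter_ne_zero Finset.univ
  have hsne : s.Nonempty := by
    by_contra hemp
    rw [Finset.not_nonempty_iff_eq_empty] at hemp
    rw [hemp] at hsum_s
    simp at hsum_s
  -- Jensen
  set B : H → ℝ := fun h => q0 h * Real.exp (f h) / q h with hB
  have hBpos : ∀ h ∈ s, 0 < B h := fun h hh =>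
    div_pos (mul_pos (hq0pos h hh) (Real.exp_pos _)) (hqpos h hh)
  have hjensen : ∑ h ∈ s, q h • Real.log (B h) ≤ Real.log (∑ h ∈ s, q h • B h) :=
    strictConcaveOn_log_Ioi.concaveOn.le_map_sum (fun h _ => hq h) hsum_s
      (fun h hh => hBpos h hh)
  simp only [smul_eq_mul] at hjensen
  have hsumB : ∑ h ∈ s, q h * B h = ∑ h ∈ s, q0 h * Real.exp (f h) := by
    apply Finset.sum_congr rfl
    intro h hh
    rw [hB, mul_div_assoc']
    exact mul_div_cancel_left₀ _ (hqpos h hh).ne'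
  have hsumB_pos : 0 < ∑ h ∈ s, q h * B h := by
    apply Finset.sum_pos
    · intro h hh; exact mul_pos (hqpos h hh) (hBpos h hh)
    · exact hsne
  have hsumB_le : ∑ h ∈ s, q h * B h ≤ K := by
    rw [hsumB]
    refine le_trans ?_ hK
    apply Finset.sum_le_sum_of_subset_of_nonneg (Finset.filter_subset _ _)
    intro h _ _
    exact mul_nonneg (hq0 h) (Real.exp_pos _).le
  have hlogle : Real.log (∑ h ∈ s, q h * B h) ≤ Real.log K :=
    Real.log_le_log hsumB_pos hsumB_le
  -- LHS identity
  have hlhs : ∑ h ∈ s, q h * Real.log (B h)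
      = (∑ h ∈ s, q h * f h) - ∑ h ∈ s, q h * Real.log (q h / q0 h) := by
    rw [← Finset.sum_sub_distrib]
    apply Finset.sum_congr rfl
    intro h hh
    have h1 : 0 < q h := hqpos h hh
    have h2 : 0 < q0 h := hq0pos h hh
    rw [hB]
    rw [Real.log_div (mul_pos h2 (Real.exp_pos _)).ne' h1.ne',
      Real.log_mul h2.ne' (Real.exp_pos _).ne', Real.log_exp,
      Real.log_div h1.ne' h2.ne']
    ring
  have hfull1 : ∑ h ∈ s, q h * f h = ∑ h : H, q h * f h := by
    rw [hs]
    apply Finset.sum_filter_of_ne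
    intro h _ hne
    intro h0
    exact hne (by rw [h0, zero_mul])
  have hfull2 : ∑ h ∈ s, q h * Real.log (q h / q0 h) = KLdiv q q0 := by
    rw [KLdiv, hs]
    apply Finset.sum_filter_of_ne
    intro h _ hne
    intro h0
    exact hne (by rw [h0, zero_mul])
  rw [hlhs, hfull1, hfull2] at hjensen
  linarith [le_trans hjensen hlogle]

lemma pb_final {H : Type*} [Fintype H] (q q0 dd : H → ℝ) (m : ℕ) (hm : 1 ≤ m) (δ : ℝ)
    (hδ0 : 0 < δ)
    (hq : ∀ h, 0 ≤ q h) (hqsum : ∑ h : H, q h = 1) (hq0 : ∀ h, 0 ≤ q0 h)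
    (habs : ∀ h, q0 h = 0 → q h = 0)
    (hF : ∑ h : H, q0 h * Real.exp ((m : ℝ) / 2 * dd h ^ 2) ≤ 2 * ((m : ℝ) + 1) / δ) :
    ∑ h : H, q h * dd h ≤ epsPB m q q0 δ := by
  have hm0 : (0 : ℝ) < m := by exact_mod_cast hm
  have hdv := pb_dv q q0 (fun h => (m : ℝ) / 2 * dd h ^ 2) hq hqsum hq0 habs
    (2 * ((m : ℝ) + 1) / δ) hF
  have hsq : ∑ h : H, q h * dd h ^ 2 ≤ (2 / (m : ℝ)) * (KLdiv q q0 + Real.log (2 * ((m : ℝ) + 1) / δ)) := by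
    have h1 : ∑ h : H, q h * dd h ^ 2 = (2 / (m : ℝ)) * ∑ h : H, q h * ((m : ℝ) / 2 * dd h ^ 2) := by
      rw [Finset.mul_sum]
      apply Finset.sum_congr rfl
      intro h _
      field_simp
    rw [h1]
    exact mul_le_mul_of_nonneg_left hdv (by positivity)
  have hcs : ∑ h : H, q h * dd h ≤ Real.sqrt (∑ h : H, q h * dd h ^ 2) := by
    have h2 : ∀ h : H, q h * dd h ≤ Real.sqrt (q h) * Real.sqrt (q h * dd h ^ 2) := by
      intro h
      rw [← Real.sqrt_mul (hq h), show q h * (q h * dd h ^ 2) = (q h * dd h) ^ 2 * 1 from by ring,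
        Real.sqrt_mul (sq_nonneg _), Real.sqrt_one, mul_one, Real.sqrt_sq_eq_abs]
      exact le_abs_self _
    calc ∑ h : H, q h * dd h ≤ ∑ h : H, Real.sqrt (q h) * Real.sqrt (q h * dd h ^ 2) :=
          Finset.sum_le_sum (fun h _ => h2 h)
      _ ≤ Real.sqrt (∑ h : H, q h) * Real.sqrt (∑ h : H, q h * dd h ^ 2) :=
          Real.sum_sqrt_mul_sqrt_le _ hq (fun h => mul_nonneg (hq h) (sq_nonneg _))
      _ = Real.sqrt (∑ h : H, q h * dd h ^ 2) := by
          rw [hqsum, Real.sqrt_one, one_mul]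
  refine le_trans hcs ?_
  rw [epsPB]
  exact Real.sqrt_le_sqrt hsq

lemma pb_tail {Ω : Type*} [MeasurableSpace Ω] (μ : Measure Ω) [IsProbabilityMeasure μ]
    (f : Ω → ℝ) (hf : Measurable f) (hb : ∀ ω, |f ω| ≤ 1) (m : ℕ) (hm : 1 ≤ m)
    (hmgf : ∀ L : ℝ, ∫ ω, Real.exp (L * f ω) ∂μ ≤ Real.exp (L ^ 2 / (4 * (m : ℝ))))
    (t : ℝ) (ht : 0 < t) :
    μ {ω | t < f ω} ≤ ENNReal.ofReal (Real.exp (-(m : ℝ) * t ^ 2)) := by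
  have hm0 : (0 : ℝ) < m := by exact_mod_cast hm
  set L := 2 * (m : ℝ) * t with hL
  have hLpos : 0 < L := by positivity
  have hmeasB : MeasurableSet {ω | Real.exp (L * t) ≤ Real.exp (L * f ω)} :=
    measurableSet_le measurable_const ((hf.const_mul L).exp)
  have hint : Integrable (fun ω => Real.exp (L * f ω)) μ := by
    apply pb_integrable_of_bound μ ((hf.const_mul L).exp) (Real.exp L)
    intro ω
    rw [Real.abs_exp, Real.exp_le_exp]
    calc L * f ω ≤ |L * f ω| := le_abs_self _
      _ = L * |f ω| := by rw [abs_mul, abs_of_pos hLpos]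
      _ ≤ L * 1 := mul_le_mul_of_nonneg_left (hb ω) hLpos.le
      _ = L := mul_one L
  have markov := mul_meas_ge_le_integral_of_nonneg
    (Filter.Eventually.of_forall (fun ω => (Real.exp_pos (L * f ω)).le)) hint (Real.exp (L * t))
  have hsub : {ω | t < f ω} ⊆ {ω | Real.exp (L * t) ≤ Real.exp (L * f ω)} := by
    intro ω hω
    exact Real.exp_le_exp.2 (mul_le_mul_of_nonneg_left (le_of_lt hω) hLpos.le)
  have h1 : (μ {ω | t < f ω}).toReal ≤
      (μ {ω | Real.exp (L * t) ≤ Real.exp (L * f ω)}).toReal :=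
    ENNReal.toReal_mono (measure_ne_top μ _) (measure_mono hsub)
  have h2 : (μ {ω | Real.exp (L * t) ≤ Real.exp (L * f ω)}).toReal ≤
      Real.exp (L ^ 2 / (4 * (m : ℝ)) - L * t) := by
    rw [Real.exp_sub, le_div_iff₀ (Real.exp_pos _)]
    calc (μ _).toReal * Real.exp (L * t)
        = Real.exp (L * t) * (μ {x | Real.exp (L * t) ≤ Real.exp (L * f x)}).toReal :=
          mul_comm _ _
      _ ≤ ∫ ω, Real.exp (L * f ω) ∂μ := markov
      _ ≤ Real.exp (L ^ 2 / (4 * (m : ℝ))) := hmgf L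
  have hexp : L ^ 2 / (4 * (m : ℝ)) - L * t = -(m : ℝ) * t ^ 2 := by
    rw [hL]
    field_simp
    ring
  rw [hexp] at h2
  rw [ENNReal.le_ofReal_iff_toReal_le (measure_ne_top μ _) (Real.exp_pos _).le]
  exact le_trans h1 h2

lemma pb_abs_tail {Ω : Type*} [MeasurableSpace Ω] (μ : Measure Ω) [IsProbabilityMeasure μ]
    (f : Ω → ℝ) (hf : Measurable f) (hb : ∀ ω, |f ω| ≤ 1) (m : ℕ) (hm : 1 ≤ m)
    (hmgf : ∀ L : ℝ, ∫ ω, Real.exp (L * f ω) ∂μ ≤ Real.exp (L ^ 2 / (4 * (m : ℝ))))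
    (t : ℝ) (ht : 0 < t) :
    μ {ω | t < |f ω|} ≤ ENNReal.ofReal (2 * Real.exp (-(m : ℝ) * t ^ 2)) := by
  have hmgf' : ∀ L : ℝ, ∫ ω, Real.exp (L * (-f ω)) ∂μ ≤ Real.exp (L ^ 2 / (4 * (m : ℝ))) := by
    intro L
    have := hmgf (-L)
    simp only [neg_mul] at this ⊢
    calc ∫ ω, Real.exp (L * -f ω) ∂μ = ∫ ω, Real.exp (-L * f ω) ∂μ := by
          congr 1; funext ω; ring_nf
      _ ≤ Real.exp ((-L) ^ 2 / (4 * (m : ℝ))) := by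
          have := hmgf (-L); simpa using this
      _ = Real.exp (L ^ 2 / (4 * (m : ℝ))) := by rw [neg_pow]; ring_nf
  have h1 := pb_tail μ f hf hb m hm hmgf t ht
  have h2 := pb_tail μ (fun ω => -f ω) hf.neg (fun ω => by simpa using hb ω) m hm hmgf' t ht
  have hsub : {ω | t < |f ω|} ⊆ {ω | t < f ω} ∪ {ω | t < -f ω} := by
    intro ω hω
    rcases lt_abs.1 (Set.mem_setOf.1 hω) with h | h
    · exact Or.inl h
    · exact Or.inr h
  calc μ {ω | t < |f ω|} ≤ μ ({ω | t < f ω} ∪ {ω | t < -f ω}) := measure_mono hsub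
    _ ≤ μ {ω | t < f ω} + μ {ω | t < -f ω} := measure_union_le _ _
    _ ≤ ENNReal.ofReal (Real.exp (-(m : ℝ) * t ^ 2)) +
        ENNReal.ofReal (Real.exp (-(m : ℝ) * t ^ 2)) := add_le_add h1 h2
    _ = ENNReal.ofReal (2 * Real.exp (-(m : ℝ) * t ^ 2)) := by
        rw [← ENNReal.ofReal_add (Real.exp_pos _).le (Real.exp_pos _).le]
        ring_nf

lemma pb_moment {Ω : Type*} [MeasurableSpace Ω] (μ : Measure Ω) [IsProbabilityMeasure μ]
    (f : Ω → ℝ) (hf : Measurable f) (hb : ∀ ω, |f ω| ≤ 1) (m : ℕ) (hm : 1 ≤ m)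
    (htail : ∀ t : ℝ, 0 < t →
      μ {ω | t < |f ω|} ≤ ENNReal.ofReal (2 * Real.exp (-(m : ℝ) * t ^ 2))) :
    ∫ ω, Real.exp ((m : ℝ) / 2 * f ω ^ 2) ∂μ ≤ 3 := by
  have hm0 : (0 : ℝ) < m := by exact_mod_cast hm
  set a : ℝ := (m : ℝ) / 2 with ha
  have ha0 : 0 < a := by positivity
  set φ : Ω → ℝ := fun ω => |f ω| with hφ
  have hφm : Measurable φ := hf.abs
  set g : ℝ → ℝ := fun t => 2 * a * t * Real.exp (a * t ^ 2) with hg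
  have hgcont : Continuous g := by
    rw [hg]
    exact ((continuous_const.mul continuous_id).mul
      (Real.continuous_exp.comp (continuous_const.mul (continuous_pow 2))))
  have hgcont2 : Continuous fun t : ℝ => 4 * a * t * Real.exp (-(a * t ^ 2)) :=
    ((continuous_const.mul continuous_id).mul
      (Real.continuous_exp.comp (continuous_const.mul (continuous_pow 2)).neg))
  -- pointwise FTC
  have hFTC : ∀ x : ℝ, ∫ t in (0 : ℝ)..x, g t = Real.exp (a * x ^ 2) - 1 := by
    intro x
    have hderiv : ∀ t ∈ Set.uIcc (0 : ℝ) x,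
        HasDerivAt (fun t : ℝ => Real.exp (a * t ^ 2)) (g t) t := by
      intro t _
      have h1 : HasDerivAt (fun t : ℝ => a * t ^ 2) (a * (2 * t ^ 1)) t :=
        (hasDerivAt_pow 2 t).const_mul a
      have := h1.exp
      convert this using 1
      rw [hg]
      ring
    rw [intervalIntegral.integral_eq_sub_of_hasDerivAt hderiv
      (hgcont.intervalIntegrable 0 x)]
    simp [Real.exp_zero]
  -- integrability of the moment integrand minus 1
  have hmeasE : Measurable fun ω => Real.exp (a * f ω ^ 2) :=
    (((hf.pow_const 2).const_mul a).exp)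
  have hboundE : ∀ ω, 1 ≤ Real.exp (a * f ω ^ 2) ∧ Real.exp (a * f ω ^ 2) ≤ Real.exp a := by
    intro ω
    constructor
    · rw [show (1 : ℝ) = Real.exp 0 from (Real.exp_zero).symm, Real.exp_le_exp]
      positivity
    · rw [Real.exp_le_exp]
      have h1 : f ω ^ 2 ≤ 1 := by
        have := hb ω
        nlinarith [abs_nonneg (f ω), sq_abs (f ω)]
      nlinarith
  have hintE : Integrable (fun ω => Real.exp (a * f ω ^ 2) - 1) μ := by
    apply pb_integrable_of_bound μ (hmeasE.sub measurable_const) (Real.exp a)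
    intro ω
    simp only [Pi.sub_apply, abs_le]
    constructor
    · have := (hboundE ω).1; have := Real.exp_pos a; linarith
    · have := (hboundE ω).2; linarith
  -- layer cake
  have hlayer := lintegral_comp_eq_lintegral_meas_lt_mul μ
    (f := φ) (g := g)
    (Filter.Eventually.of_forall (fun ω => abs_nonneg (f ω)))
    hφm.aemeasurable
    (fun t _ => hgcont.intervalIntegrable 0 t)
    (by
      filter_upwards [ae_restrict_mem measurableSet_Ioi] with t ht
      have : (0:ℝ) < t := ht
      rw [hg]; positivity)
  -- LHS of layer cake
  have hLHS : ∫⁻ ω, ENNReal.ofReal (∫ t in (0 : ℝ)..(φ ω), g t) ∂μ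
      = ENNReal.ofReal (∫ ω, (Real.exp (a * f ω ^ 2) - 1) ∂μ) := by
    have hpt : ∀ ω, (∫ t in (0 : ℝ)..(φ ω), g t) = Real.exp (a * f ω ^ 2) - 1 := by
      intro ω
      rw [hFTC (φ ω), hφ]
      simp [sq_abs]
    simp_rw [hpt]
    rw [← ofReal_integral_eq_lintegral_ofReal hintE
      (Filter.Eventually.of_forall (fun ω => by
        simp only [Pi.zero_apply]
        have := (hboundE ω).1; linarith))]
  -- RHS of layer cake: bound
  have hIoc : ∫⁻ t in Set.Ioc (0:ℝ) 1, μ {ω | t < φ ω} * ENNReal.ofReal (g t)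
      ≤ ENNReal.ofReal 2 := by
    have hbound : ∀ t ∈ Set.Ioc (0:ℝ) 1,
        μ {ω | t < φ ω} * ENNReal.ofReal (g t)
          ≤ ENNReal.ofReal (4 * a * t * Real.exp (-(a * t ^ 2))) := by
      intro t ht
      have ht0 : 0 < t := ht.1
      calc μ {ω | t < φ ω} * ENNReal.ofReal (g t)
          ≤ ENNReal.ofReal (2 * Real.exp (-(m : ℝ) * t ^ 2)) * ENNReal.ofReal (g t) :=
            mul_le_mul_left (htail t ht0) _
        _ = ENNReal.ofReal (2 * Real.exp (-(m : ℝ) * t ^ 2) * g t) := by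
            rw [← ENNReal.ofReal_mul (by positivity)]
        _ = ENNReal.ofReal (4 * a * t * Real.exp (-(a * t ^ 2))) := by
            congr 1
            rw [hg]
            rw [show -(m : ℝ) * t ^ 2 = -(2 * a * t ^ 2) from by rw [ha]; ring]
            rw [show (2 : ℝ) * Real.exp (-(2 * a * t ^ 2)) * (2 * a * t * Real.exp (a * t ^ 2))
              = 4 * a * t * (Real.exp (-(2 * a * t ^ 2)) * Real.exp (a * t ^ 2)) from by ring]
            rw [← Real.exp_add]
            congr 2
            ring
    calc ∫⁻ t in Set.Ioc (0:ℝ) 1, μ {ω | t < φ ω} * ENNReal.ofReal (g t)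
        ≤ ∫⁻ t in Set.Ioc (0:ℝ) 1, ENNReal.ofReal (4 * a * t * Real.exp (-(a * t ^ 2))) := by
          apply setLIntegral_mono' measurableSet_Ioc hbound
      _ = ENNReal.ofReal (∫ t in Set.Ioc (0:ℝ) 1, 4 * a * t * Real.exp (-(a * t ^ 2))) := by
          rw [← ofReal_integral_eq_lintegral_ofReal]
          · exact hgcont2.integrableOn_Ioc
          · filter_upwards [ae_restrict_mem measurableSet_Ioc] with t ht
            have ht0 : (0:ℝ) < t := ht.1
            positivity
      _ ≤ ENNReal.ofReal 2 := by
          apply ENNReal.ofReal_le_ofReal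
          have heq : ∫ t in Set.Ioc (0:ℝ) 1, 4 * a * t * Real.exp (-(a * t ^ 2))
              = ∫ t in (0:ℝ)..1, 4 * a * t * Real.exp (-(a * t ^ 2)) := by
            rw [intervalIntegral.integral_of_le zero_le_one]
          rw [heq]
          have hderiv2 : ∀ t ∈ Set.uIcc (0:ℝ) 1,
              HasDerivAt (fun t : ℝ => -2 * Real.exp (-(a * t ^ 2)))
                (4 * a * t * Real.exp (-(a * t ^ 2))) t := by
            intro t _
            have h1 : HasDerivAt (fun t : ℝ => -(a * t ^ 2)) (-(a * (2 * t ^ 1))) t :=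
              ((hasDerivAt_pow 2 t).const_mul a).neg
            have := (h1.exp).const_mul (-2 : ℝ)
            refine this.congr_deriv ?_
            ring
          rw [intervalIntegral.integral_eq_sub_of_hasDerivAt hderiv2
            (hgcont2.intervalIntegrable 0 1)]
          have h2' : Real.exp (-(a * 0 ^ 2)) = 1 := by norm_num
          rw [h2']
          have h1' : 0 < Real.exp (-(a * 1 ^ 2)) := Real.exp_pos _
          linarith
  have hIoi1 : ∫⁻ t in Set.Ioi (1:ℝ), μ {ω | t < φ ω} * ENNReal.ofReal (g t) = 0 := by
    have hzero : ∀ t ∈ Set.Ioi (1:ℝ), μ {ω | t < φ ω} * ENNReal.ofReal (g t) = 0 := by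
      intro t ht
      have : {ω | t < φ ω} = ∅ := by
        ext ω
        simp only [Set.mem_setOf_eq, Set.mem_empty_iff_false, iff_false, not_lt]
        exact le_trans (hb ω) (le_of_lt ht)
      rw [this, measure_empty, zero_mul]
    calc ∫⁻ t in Set.Ioi (1:ℝ), μ {ω | t < φ ω} * ENNReal.ofReal (g t)
        = ∫⁻ t in Set.Ioi (1:ℝ), 0 := by
          apply setLIntegral_congr_fun measurableSet_Ioi
          exact hzero
      _ = 0 := lintegral_zero
  have hRHS : ∫⁻ t in Set.Ioi (0:ℝ), μ {ω | t < φ ω} * ENNReal.ofReal (g t)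
      ≤ ENNReal.ofReal 2 := by
    have hsplit : Set.Ioi (0:ℝ) = Set.Ioc 0 1 ∪ Set.Ioi 1 :=
      (Set.Ioc_union_Ioi_eq_Ioi zero_le_one).symm
    rw [hsplit, lintegral_union measurableSet_Ioi (Set.Ioc_disjoint_Ioi le_rfl), hIoi1, add_zero]
    exact hIoc
  -- combine
  have hkey : ∫ ω, (Real.exp (a * f ω ^ 2) - 1) ∂μ ≤ 2 := by
    have h1 : ENNReal.ofReal (∫ ω, (Real.exp (a * f ω ^ 2) - 1) ∂μ) ≤ ENNReal.ofReal 2 := by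
      rw [← hLHS, hlayer]
      exact hRHS
    have h2 : (0:ℝ) ≤ ∫ ω, (Real.exp (a * f ω ^ 2) - 1) ∂μ :=
      integral_nonneg (fun ω => by
        have := (hboundE ω).1; simp only [Pi.zero_apply]; linarith)
    exact (ENNReal.ofReal_le_ofReal_iff (by norm_num)).1 h1
  have hfin : ∫ ω, Real.exp (a * f ω ^ 2) ∂μ
      = (∫ ω, (Real.exp (a * f ω ^ 2) - 1) ∂μ) + 1 := by
    have h := integral_add hintE (integrable_const (1:ℝ))
    simp only [sub_add_cancel] at h
    rw [h]
    simp
  rw [hfin]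
  linarith

lemma pb_mgf_prod {Z : Type*} [MeasurableSpace Z] (ν : Measure Z) [IsProbabilityMeasure ν]
    (g : Z → ℝ) (hg : Measurable g) (h01 : ∀ z, g z = 0 ∨ g z = 1)
    (m n : ℕ) (hm : 1 ≤ m) (hmn : m ≤ n) (L : ℝ) :
    ∫ ω : (Fin m → Z) × (Fin n → Z),
        Real.exp (L * ((1 / (n : ℝ)) * (∑ k, g (ω.2 k)) - (1 / (m : ℝ)) * (∑ k, g (ω.1 k))))
      ∂((Measure.pi fun _ : Fin m => ν).prod (Measure.pi fun _ : Fin n => ν))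
      ≤ Real.exp (L ^ 2 / (4 * (m : ℝ))) := by
  have hm0 : (0 : ℝ) < m := by exact_mod_cast hm
  have hn0 : (0 : ℝ) < n := by exact_mod_cast lt_of_lt_of_le (by exact_mod_cast hm) hmn
  set p := ∫ z, g z ∂ν with hp
  have hsplit : (fun ω : (Fin m → Z) × (Fin n → Z) =>
      Real.exp (L * ((1 / (n : ℝ)) * (∑ k, g (ω.2 k)) - (1 / (m : ℝ)) * (∑ k, g (ω.1 k)))))
      = fun ω => (∏ k, Real.exp ((-L / (m : ℝ)) * g (ω.1 k))) *
          (∏ k, Real.exp ((L / (n : ℝ)) * g (ω.2 k))) := by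
    funext ω
    rw [← Real.exp_sum, ← Real.exp_sum, ← Real.exp_add]
    congr 1
    rw [← Finset.mul_sum, ← Finset.mul_sum]
    field_simp
    ring
  rw [hsplit,
    integral_prod_mul (f := fun S : Fin m → Z => ∏ k, Real.exp ((-L / (m : ℝ)) * g (S k)))
      (g := fun T : Fin n → Z => ∏ k, Real.exp ((L / (n : ℝ)) * g (T k))),
    pb_pi_pow ν m (fun z => Real.exp ((-L / (m : ℝ)) * g z)),
    pb_pi_pow ν n (fun z => Real.exp ((L / (n : ℝ)) * g z))]
  have h1 := pb_mgf_single ν g hg h01 (-L / (m : ℝ))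
  have h2 := pb_mgf_single ν g hg h01 (L / (n : ℝ))
  rw [← hp] at h1 h2
  have hb1 : (∫ z, Real.exp ((-L / (m : ℝ)) * g z) ∂ν) ^ m
      ≤ (Real.exp ((-L / (m : ℝ)) * p + (-L / (m : ℝ)) ^ 2 / 8)) ^ m :=
    pow_le_pow_left₀ (integral_nonneg fun z => (Real.exp_pos _).le) h1 m
  have hb2 : (∫ z, Real.exp ((L / (n : ℝ)) * g z) ∂ν) ^ n
      ≤ (Real.exp ((L / (n : ℝ)) * p + (L / (n : ℝ)) ^ 2 / 8)) ^ n :=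
    pow_le_pow_left₀ (integral_nonneg fun z => (Real.exp_pos _).le) h2 n
  calc (∫ z, Real.exp ((-L / (m : ℝ)) * g z) ∂ν) ^ m *
        (∫ z, Real.exp ((L / (n : ℝ)) * g z) ∂ν) ^ n
      ≤ (Real.exp ((-L / (m : ℝ)) * p + (-L / (m : ℝ)) ^ 2 / 8)) ^ m *
        (Real.exp ((L / (n : ℝ)) * p + (L / (n : ℝ)) ^ 2 / 8)) ^ n := by
        apply mul_le_mul hb1 hb2 (pow_nonneg (integral_nonneg fun z => (Real.exp_pos _).le) _)
          (pow_nonneg (Real.exp_pos _).le _)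
    _ = Real.exp ((m : ℝ) * ((-L / (m : ℝ)) * p + (-L / (m : ℝ)) ^ 2 / 8)) *
        Real.exp ((n : ℝ) * ((L / (n : ℝ)) * p + (L / (n : ℝ)) ^ 2 / 8)) := by
        rw [← Real.exp_nat_mul, ← Real.exp_nat_mul]
    _ = Real.exp (L ^ 2 / (8 * (m : ℝ)) + L ^ 2 / (8 * (n : ℝ))) := by
        rw [← Real.exp_add]
        congr 1
        field_simp
        ring
    _ ≤ Real.exp (L ^ 2 / (4 * (m : ℝ))) := by
        rw [Real.exp_le_exp]
        have hmono : L ^ 2 / (8 * (n : ℝ)) ≤ L ^ 2 / (8 * (m : ℝ)) := by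
          gcongr
        have : L ^ 2 / (8 * (m : ℝ)) + L ^ 2 / (8 * (m : ℝ)) = L ^ 2 / (4 * (m : ℝ)) := by
          field_simp
          ring
        linarith

/-- transfer of empirical error from training to test set. -/
theorem pac_bayes_train_to_test
    {X : Type*} [MeasurableSpace X] {H : Type*} [Fintype H] [Nonempty H]
    (c : H → X → ℝ) (hc : ∀ h x, c h x = 1 ∨ c h x = -1)
    (hmeas : ∀ h, Measurable (c h))
    (D : Measure (X × ℝ)) [IsProbabilityMeasure D]
    (m n : ℕ) (hm : 1 ≤ m) (hmn : m ≤ n)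
    (δ : ℝ) (hδ0 : 0 < δ) (hδ1 : δ < 1)
    (q0 : H → ℝ) (hq0 : ∀ h, 0 ≤ q0 h) (hq0sum : ∑ h : H, q0 h = 1) :
    ENNReal.ofReal (1 - δ) ≤
      ((Measure.pi (fun _ : Fin m => D)).prod (Measure.pi (fun _ : Fin n => D)))
        {ST : (Fin m → X × ℝ) × (Fin n → X × ℝ) |
          ∀ q : H → ℝ, (∀ h, 0 ≤ q h) → (∑ h : H, q h = 1) →
            (∀ h, q0 h = 0 → q h = 0) →
            ∑ h : H, q h * empErr c n ST.2 h ≤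
              (∑ h : H, q h * empErr c m ST.1 h) + epsPB m q q0 δ} := by
  have hm0 : (0 : ℝ) < m := by exact_mod_cast hm
  have hn : 1 ≤ n := le_trans hm hmn
  have hn0 : (0 : ℝ) < n := by exact_mod_cast hn
  set μ := ((Measure.pi (fun _ : Fin m => D)).prod (Measure.pi (fun _ : Fin n => D))) with hμdef
  haveI : IsProbabilityMeasure μ := by
    rw [hμdef]; infer_instance
  -- indicator functions
  have hg01 : ∀ (h : H) (z : X × ℝ),
      (if c h z.1 ≠ z.2 then (1 : ℝ) else 0) = 0 ∨
      (if c h z.1 ≠ z.2 then (1 : ℝ) else 0) = 1 := by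
    intro h z
    by_cases hz : c h z.1 ≠ z.2 <;> simp [hz]
  have hgmeas : ∀ h : H, Measurable (fun z : X × ℝ => if c h z.1 ≠ z.2 then (1 : ℝ) else 0) := by
    intro h
    have hmeas2 : Measurable (fun z : X × ℝ => c h z.1 - z.2) :=
      ((hmeas h).comp measurable_fst).sub measurable_snd
    have hset : MeasurableSet {z : X × ℝ | c h z.1 ≠ z.2} := by
      have h0 : {z : X × ℝ | c h z.1 ≠ z.2} = (fun z : X × ℝ => c h z.1 - z.2) ⁻¹' ({0}ᶜ) := by
        ext z
        simp [sub_eq_zero]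
      rw [h0]
      exact hmeas2 (measurableSet_singleton 0).compl
    exact Measurable.ite hset measurable_const measurable_const
  -- empirical error bounds
  have hemp01 : ∀ (k : ℕ), 1 ≤ k → ∀ (S : Fin k → X × ℝ) (h : H),
      0 ≤ empErr c k S h ∧ empErr c k S h ≤ 1 := by
    intro k hk S h
    have hk0 : (0 : ℝ) < k := by exact_mod_cast hk
    have h0 : (0 : ℝ) ≤ ∑ j : Fin k, (if c h (S j).1 ≠ (S j).2 then (1 : ℝ) else 0) :=
      Finset.sum_nonneg fun j _ => by rcases hg01 h (S j) with h' | h' <;> rw [h'] <;> norm_num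
    have h1 : (∑ j : Fin k, (if c h (S j).1 ≠ (S j).2 then (1 : ℝ) else 0)) ≤ k := by
      calc (∑ j : Fin k, (if c h (S j).1 ≠ (S j).2 then (1 : ℝ) else 0))
          ≤ ∑ _j : Fin k, (1 : ℝ) :=
            Finset.sum_le_sum fun j _ => by
              rcases hg01 h (S j) with h' | h' <;> rw [h'] <;> norm_num
        _ = k := by simp
    constructor
    · rw [empErr]
      positivity
    · rw [empErr]
      calc (1 / (k : ℝ)) * ∑ j : Fin k, (if c h (S j).1 ≠ (S j).2 then (1 : ℝ) else 0)
          ≤ (1 / (k : ℝ)) * k := mul_le_mul_of_nonneg_left h1 (by positivity)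
        _ = 1 := by field_simp
  -- the deviation functions
  set Δ : H → (Fin m → X × ℝ) × (Fin n → X × ℝ) → ℝ :=
    fun h ω => empErr c n ω.2 h - empErr c m ω.1 h with hΔ
  have hΔmeas : ∀ h, Measurable (Δ h) := by
    intro h
    rw [hΔ]
    simp only [empErr]
    apply Measurable.sub
    · apply Measurable.const_mul
      apply Finset.measurable_sum
      intro k _
      exact (hgmeas h).comp ((measurable_pi_apply k).comp measurable_snd)
    · apply Measurable.const_mul
      apply Finset.measurable_sum
      intro k _
      exact (hgmeas h).comp ((measurable_pi_apply k).comp measurable_fst)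
  have hΔbdd : ∀ h ω, |Δ h ω| ≤ 1 := by
    intro h ω
    have h1 := hemp01 n hn ω.2 h
    have h2 := hemp01 m hm ω.1 h
    rw [abs_le]
    have hd : Δ h ω = empErr c n ω.2 h - empErr c m ω.1 h := rfl
    rw [hd]
    constructor <;> linarith [h1.1, h1.2, h2.1, h2.2]
  -- MGF bound
  have hmgf : ∀ (h : H) (L : ℝ),
      ∫ ω, Real.exp (L * Δ h ω) ∂μ ≤ Real.exp (L ^ 2 / (4 * (m : ℝ))) := by
    intro h L
    have hgoal := pb_mgf_prod D (fun z : X × ℝ => if c h z.1 ≠ z.2 then (1 : ℝ) else 0)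
      (hgmeas h) (hg01 h) m n hm hmn L
    have heq : (fun ω : (Fin m → X × ℝ) × (Fin n → X × ℝ) => Real.exp (L * Δ h ω))
        = fun ω => Real.exp (L * ((1 / (n : ℝ)) *
            (∑ k, (if c h ((ω.2 k)).1 ≠ (ω.2 k).2 then (1 : ℝ) else 0)) -
          (1 / (m : ℝ)) * (∑ k, (if c h ((ω.1 k)).1 ≠ (ω.1 k).2 then (1 : ℝ) else 0)))) := by
      funext ω
      have hd : Δ h ω = empErr c n ω.2 h - empErr c m ω.1 h := rfl
      rw [hd]
      simp only [empErr]
    rw [hμdef, heq]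
    exact hgoal
  -- moment bound
  have hmom : ∀ h : H, ∫ ω, Real.exp ((m : ℝ) / 2 * (Δ h ω) ^ 2) ∂μ ≤ 3 := by
    intro h
    exact pb_moment μ (Δ h) (hΔmeas h) (hΔbdd h) m hm
      (fun t ht => pb_abs_tail μ (Δ h) (hΔmeas h) (hΔbdd h) m hm (hmgf h) t ht)
  -- the exponential moment sum
  set F : (Fin m → X × ℝ) × (Fin n → X × ℝ) → ℝ :=
    fun ω => ∑ h : H, q0 h * Real.exp ((m : ℝ) / 2 * (Δ h ω) ^ 2) with hF
  have hFmeas : Measurable F := by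
    rw [hF]
    apply Finset.measurable_sum
    intro h _
    exact ((((hΔmeas h).pow_const 2).const_mul _).exp).const_mul _
  have hFnn : ∀ ω, 0 ≤ F ω := by
    intro ω
    apply Finset.sum_nonneg
    intro h _
    exact mul_nonneg (hq0 h) (Real.exp_pos _).le
  have hexpint : ∀ h : H, Integrable (fun ω => Real.exp ((m : ℝ) / 2 * (Δ h ω) ^ 2)) μ := by
    intro h
    apply pb_integrable_of_bound μ (((hΔmeas h).pow_const 2).const_mul _).exp
      (Real.exp ((m : ℝ) / 2))
    intro ω
    rw [Real.abs_exp, Real.exp_le_exp]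
    have h1 : (Δ h ω) ^ 2 ≤ 1 := by
      have := hΔbdd h ω
      nlinarith [abs_nonneg (Δ h ω), sq_abs (Δ h ω)]
    calc (m : ℝ) / 2 * Δ h ω ^ 2 ≤ (m : ℝ) / 2 * 1 :=
          mul_le_mul_of_nonneg_left h1 (by positivity)
      _ = (m : ℝ) / 2 := mul_one _
  have hFint : Integrable F μ := by
    rw [hF]
    apply integrable_finset_sum
    intro h _
    exact (hexpint h).const_mul _
  have hFint3 : ∫ ω, F ω ∂μ ≤ 3 := by
    rw [hF]
    rw [integral_finset_sum _ (fun h _ => (hexpint h).const_mul _)]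
    calc ∑ h : H, ∫ ω, q0 h * Real.exp ((m : ℝ) / 2 * (Δ h ω) ^ 2) ∂μ
        = ∑ h : H, q0 h * ∫ ω, Real.exp ((m : ℝ) / 2 * (Δ h ω) ^ 2) ∂μ := by
          apply Finset.sum_congr rfl
          intro h _
          exact integral_const_mul _ _
      _ ≤ ∑ h : H, q0 h * 3 :=
          Finset.sum_le_sum fun h _ => mul_le_mul_of_nonneg_left (hmom h) (hq0 h)
      _ = 3 := by rw [← Finset.sum_mul, hq0sum, one_mul]
  -- Markov
  set K : ℝ := 2 * ((m : ℝ) + 1) / δ with hK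
  have hKpos : 0 < K := by positivity
  have markov := mul_meas_ge_le_integral_of_nonneg
    (Filter.Eventually.of_forall hFnn) hFint K
  have hbad : (μ {ω | K ≤ F ω}).toReal ≤ δ := by
    have h1 : K * (μ {ω | K ≤ F ω}).toReal ≤ 3 := le_trans markov hFint3
    have h2 : (μ {ω | K ≤ F ω}).toReal ≤ 3 / K := by
      rw [le_div_iff₀ hKpos]
      linarith [h1]
    refine le_trans h2 ?_
    rw [hK, div_div_eq_mul_div, div_le_iff₀ (by positivity)]
    have h3 : (1 : ℝ) ≤ (m : ℝ) := by exact_mod_cast hm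
    nlinarith [hδ0.le]
  have hbad' : μ {ω | K ≤ F ω} ≤ ENNReal.ofReal δ :=
    (ENNReal.le_ofReal_iff_toReal_le (measure_ne_top μ _) hδ0.le).2 hbad
  have hGmeas : MeasurableSet {ω | K ≤ F ω} := measurableSet_le measurable_const hFmeas
  -- inclusion of the good event
  have hsub : {ω | K ≤ F ω}ᶜ ⊆
      {ST : (Fin m → X × ℝ) × (Fin n → X × ℝ) |
        ∀ q : H → ℝ, (∀ h, 0 ≤ q h) → (∑ h : H, q h = 1) →
          (∀ h, q0 h = 0 → q h = 0) →
          ∑ h : H, q h * empErr c n ST.2 h ≤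
            (∑ h : H, q h * empErr c m ST.1 h) + epsPB m q q0 δ} := by
    intro ω hω
    simp only [Set.mem_compl_iff, Set.mem_setOf_eq, not_le] at hω
    intro q hq hqsum habs
    have hdd := pb_final q q0 (fun h => Δ h ω) m hm δ hδ0 hq hqsum hq0 habs (le_of_lt hω)
    have hexpand : ∑ h : H, q h * Δ h ω =
        (∑ h : H, q h * empErr c n ω.2 h) - ∑ h : H, q h * empErr c m ω.1 h := by
      rw [← Finset.sum_sub_distrib]
      apply Finset.sum_congr rfl
      intro h _
      have hd : Δ h ω = empErr c n ω.2 h - empErr c m ω.1 h := rfl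
      rw [hd]
      ring
    rw [hexpand] at hdd
    linarith
  -- conclusion
  calc ENNReal.ofReal (1 - δ) = 1 - ENNReal.ofReal δ := by
        rw [← ENNReal.ofReal_one, ← ENNReal.ofReal_sub 1 hδ0.le]
    _ ≤ 1 - μ {ω | K ≤ F ω} := tsub_le_tsub_left hbad' 1
    _ = μ ({ω | K ≤ F ω}ᶜ) := (prob_compl_eq_one_sub hGmeas).symm
    _ ≤ _ := measure_mono hsub
end

section
/- Error bound for the minimax predictor: if y ∈ [-1,1]^n satisfies (1/n)·∑_{i=1}^n y_i a_i ≥ λ, then the misclassification probability of the minimax predictor satisfies (1/2)·(1 - (1/n)·∑_{i=1}^n y_i g*_i) ≤ (1/2)·(1 - λ) - (1/(2n))·∑_{i=1}^{v-1} (1 - |a_i|). -/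
open Finset

/-- The minimax optimal predictor strategy. -/
noncomputable def gstar (a : ℕ → ℝ) (v : ℕ) : ℕ → ℝ :=
  fun i => if i ≤ v then Real.sign (a i) else a i / |a v|

/-- error bound for the minimax predictor. -/
theorem minimax_predictor_error_bound
    (n : ℕ) (hn : 1 ≤ n) (a : ℕ → ℝ)
    (hord : ∀ i j : ℕ, 1 ≤ i → i ≤ j → j ≤ n → |a j| ≤ |a i|)
    (habs : ∀ i ∈ Icc 1 n, |a i| ≤ 1)
    (lam : ℝ) (hlam_pos : 0 < lam)
    (hlam_le : lam ≤ (1 / (n : ℝ)) * ∑ i ∈ Icc 1 n, |a i|)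
    (v : ℕ) (hv1 : 1 ≤ v) (hvn : v ≤ n)
    (hv_ge : lam ≤ (1 / (n : ℝ)) * ∑ j ∈ Icc 1 v, |a j|)
    (hv_min : ∀ i : ℕ, 1 ≤ i → i < v → (1 / (n : ℝ)) * ∑ j ∈ Icc 1 i, |a j| < lam)
    (y : ℕ → ℝ) (hy : ∀ i ∈ Icc 1 n, |y i| ≤ 1)
    (hcorr : lam ≤ (1 / (n : ℝ)) * ∑ i ∈ Icc 1 n, y i * a i) :
    (1 / 2) * (1 - (1 / (n : ℝ)) * ∑ i ∈ Icc 1 n, y i * gstar a v i) ≤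
      (1 / 2) * (1 - lam) -
        (1 / (2 * (n : ℝ))) * ∑ i ∈ Icc 1 (v - 1), (1 - |a i|) := by
  obtain ⟨w, rfl⟩ : ∃ w, v = w + 1 := ⟨v - 1, by omega⟩
  simp only [Nat.add_sub_cancel] at *
  have hn' : (0 : ℝ) < n := by exact_mod_cast Nat.pos_of_ne_zero (by omega)
  have hn0 : (n : ℝ) ≠ 0 := ne_of_gt hn'
  set c := |a (w + 1)| with hc
  set S := ∑ i ∈ Icc 1 n, y i * a i with hS
  set Q := ∑ j ∈ Icc 1 w, |a j| with hQ
  have hQnn : 0 ≤ Q := Finset.sum_nonneg fun j _ => abs_nonneg _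
  have hmul : ∀ X : ℝ, lam ≤ (1 / (n : ℝ)) * X → n * lam ≤ X := by
    intro X h
    have h2 := mul_le_mul_of_nonneg_left h hn'.le
    have h3 : (n : ℝ) * ((1 / n) * X) = X := by field_simp
    linarith
  have hS_ge : (n : ℝ) * lam ≤ S := hmul S hcorr
  have hQlt : Q < (n : ℝ) * lam := by
    rcases Nat.eq_zero_or_pos w with h | h
    · have hQ0 : Q = 0 := by rw [hQ]; subst h; simp
      rw [hQ0]; positivity
    · have h2 := hv_min w h (Nat.lt_succ_self w)
      have h3 := mul_lt_mul_of_pos_left h2 hn'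
      have h4 : (n : ℝ) * ((1 / n) * Q) = Q := by field_simp
      linarith
  have hvsplit : ∑ j ∈ Icc 1 (w + 1), |a j| = Q + c := by
    rw [Finset.sum_Icc_succ_top (by omega : 1 ≤ w + 1)]
  have hc_pos : 0 < c := by
    have h2 := hmul _ hv_ge
    rw [hvsplit] at h2
    linarith
  have hc_le : c ≤ 1 := habs (w + 1) (mem_Icc.mpr ⟨by omega, hvn⟩)
  -- termwise bound
  have hterm : ∀ i ∈ Icc 1 n,
      y i * a i / c + (if i ≤ w + 1 then 1 - |a i| / c else 0) ≤
        y i * gstar a (w + 1) i := by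
    intro i hi
    rw [mem_Icc] at hi
    by_cases hiv : i ≤ w + 1
    · rw [if_pos hiv]
      simp only [gstar, if_pos hiv]
      have hai : c ≤ |a i| := hord i (w + 1) hi.1 hiv hvn
      have hai0 : a i ≠ 0 := by
        intro h; rw [h, abs_zero] at hai; linarith
      have hsgn : |Real.sign (a i)| = 1 := by
        rcases Real.sign_apply_eq_of_ne_zero (a i) hai0 with h | h <;> rw [h] <;> norm_num
      have hy' : |y i| ≤ 1 := hy i (mem_Icc.mpr hi)
      set t := y i * Real.sign (a i) with ht
      have ht1 : t ≤ 1 := by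
        have : |t| ≤ 1 := by rw [ht, abs_mul, hsgn, mul_one]; exact hy'
        exact (abs_le.mp this).2
      have hsa : Real.sign (a i) * |a i| = a i := by
        rcases hai0.lt_or_gt with h | h
        · rw [Real.sign_of_neg h, abs_of_neg h]; ring
        · rw [Real.sign_of_pos h, abs_of_pos h]; ring
      have hya : y i * a i = t * |a i| := by
        rw [ht, mul_assoc, hsa]
      rw [hya]
      have key : t * |a i| + (c - |a i|) ≤ t * c := by nlinarith
      have heq : t - (t * |a i| / c + (1 - |a i| / c)) =
          (t * c - (t * |a i| + (c - |a i|))) / c := by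
        field_simp
      have : 0 ≤ t - (t * |a i| / c + (1 - |a i| / c)) := by
        rw [heq]; apply div_nonneg (by linarith) hc_pos.le
      linarith
    · rw [if_neg hiv]
      simp only [gstar, if_neg hiv]
      rw [mul_div_assoc]
      simp
      exact le_refl _
  have hsum1 : ∑ i ∈ Icc 1 n, (y i * a i / c + (if i ≤ w + 1 then 1 - |a i| / c else 0)) ≤
      ∑ i ∈ Icc 1 n, y i * gstar a (w + 1) i := Finset.sum_le_sum hterm
  have hind : ∑ i ∈ Icc 1 n, (if i ≤ w + 1 then 1 - |a i| / c else 0) =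
      ∑ i ∈ Icc 1 (w + 1), (1 - |a i| / c) := by
    rw [← Finset.sum_subset (Finset.Icc_subset_Icc_right hvn)]
    · apply Finset.sum_congr rfl
      intro i hi
      rw [if_pos (mem_Icc.mp hi).2]
    · intro i hmem hi
      rw [if_neg]
      intro h
      exact hi (mem_Icc.mpr ⟨(mem_Icc.mp hmem).1, h⟩)
  have hsplitL : ∑ i ∈ Icc 1 n, (y i * a i / c + (if i ≤ w + 1 then 1 - |a i| / c else 0)) =
      S / c + ∑ i ∈ Icc 1 (w + 1), (1 - |a i| / c) := by
    rw [Finset.sum_add_distrib, hind, ← Finset.sum_div]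
  have hindval : ∑ i ∈ Icc 1 (w + 1), (1 - |a i| / c) = ((w : ℝ) + 1) - (Q + c) / c := by
    rw [Finset.sum_sub_distrib, Finset.sum_const, Nat.card_Icc, ← Finset.sum_div, hvsplit]
    push_cast
    ring
  have hT : S / c + (((w : ℝ) + 1) - (Q + c) / c) ≤
      ∑ i ∈ Icc 1 n, y i * gstar a (w + 1) i := by
    rw [← hindval, ← hsplitL]; exact hsum1
  -- key arithmetic: S/c - Q/c ≥ nλ - Q
  have harith : (n : ℝ) * lam - Q ≤ (S - Q) / c := by
    rw [le_div_iff₀ hc_pos]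
    nlinarith
  have hfinal : (n : ℝ) * lam + (w : ℝ) - Q ≤ ∑ i ∈ Icc 1 n, y i * gstar a (w + 1) i := by
    have h1 : (Q + c) / c = Q / c + 1 := by field_simp
    have h2 : (S - Q) / c = S / c - Q / c := by rw [sub_div]
    rw [h1] at hT
    rw [h2] at harith
    linarith
  have hP : ∑ i ∈ Icc 1 w, (1 - |a i|) = (w : ℝ) - Q := by
    rw [Finset.sum_sub_distrib, Finset.sum_const, Nat.card_Icc, hQ]
    push_cast
    ring
  rw [hP]
  set T := ∑ i ∈ Icc 1 n, y i * gstar a (w + 1) i with hTdef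
  have h5 : lam + (1 / (n : ℝ)) * ((w : ℝ) - Q) ≤ (1 / (n : ℝ)) * T := by
    have h6 := mul_le_mul_of_nonneg_left hfinal (by positivity : (0:ℝ) ≤ 1 / n)
    have h7 : (1 / (n : ℝ)) * ((n : ℝ) * lam + (w : ℝ) - Q) =
        lam + (1 / (n : ℝ)) * ((w : ℝ) - Q) := by field_simp; ring
    linarith
  have h8 : (1 / (2 * (n : ℝ))) * ((w : ℝ) - Q) = (1 / 2) * ((1 / (n : ℝ)) * ((w : ℝ) - Q)) := by
    field_simp
  linarith
end
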